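/- arXiv:1910.06436 — 6 statements merged into one kernel-verified Lean document; each statement's English description precedes it below -/
import Mathlib

section
/- Let q be a prime power, n ≥ 1, and let a₁,…,a_k ∈ F_q be nonzero coefficients such that the multiset {a₁,…,a_k} can be partitioned into pairs each summing to zero (so k = 2m and, after reindexing, the linear form is a₁(x₁−x₁') + ⋯ + a_m(x_m−x_m')). Then for every function f : F_q^n → [0,1], the average of f(x₁)⋯f(x_k) over all tuples (x₁,…,x_k) ∈ (F_q^n)^k satisfying a₁x₁+⋯+a_kx_k = 0 is at least (E f)^k, where E f is the average of f over F_q^n. -/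
/-!
Split the coordinates into pairs `{p, σ p}`, so that the equation reads `g y = g z` with
`g y = ∑ a_p y_p` over one representative of each pair. Writing `H u` for the total weight
`∑_{g y = u} ∏ f(y_p)`, the weighted count of solutions is `∑_u (H u)²`, while
`∑_u H u = (∑ f)^(k/2)`.
Cauchy–Schwarz gives `(∑ f)^k ≤ |V| ∑_u (H u)²`. Finally, the translates of the solutions
along a coordinate with nonzero coefficient are pairwise distinct, so there are at most
`|V|^(k-1)` solutions.
-/

open Finset

def involutionPairEquiv {ι : Type*} [LinearOrder ι] (σ : Equiv.Perm ι)
    (hσ : Function.Involutive σ) (hfix : ∀ i, σ i ≠ i) :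
    {i // i < σ i} ⊕ {i // i < σ i} ≃ ι :=
  (Equiv.sumCongr (Equiv.refl _) (σ.subtypeEquiv fun i => by
    rw [hσ i, not_lt]
    exact ⟨le_of_lt, fun h => h.lt_of_ne (hfix i).symm⟩)).trans (Equiv.sumCompl _)

lemma sum_sum_ite_eq_sum_sq_fiberwise {α β M : Type*} [Fintype α] [Fintype β] [DecidableEq β]
    [CommSemiring M] (g : α → β) (A : α → M) :
    ∑ y, ∑ z, (if g y = g z then A y * A z else 0) = ∑ u, (∑ y with g y = u, A y) ^ 2 := by
  calc ∑ y, ∑ z, (if g y = g z then A y * A z else 0)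
      = ∑ y, A y * ∑ z with g z = g y, A z := by
        simp only [Finset.mul_sum, Finset.sum_filter, mul_ite, mul_zero, eq_comm]
    _ = ∑ u, ∑ y with g y = u, A y * ∑ z with g z = u, A z := by
        rw [← Finset.sum_fiberwise univ g]
        refine Finset.sum_congr rfl fun u _ => Finset.sum_congr rfl fun y hy => ?_
        rw [(Finset.mem_filter.mp hy).2]
    _ = ∑ u, (∑ y with g y = u, A y) ^ 2 := by simp_rw [sq, Finset.sum_mul]

section LinearForm

variable {ι R V : Type*} [Fintype ι] [DecidableEq ι] [Ring R] [AddCommGroup V] [Module R V]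
  [Fintype V] [DecidableEq V]

def linearSolutions (a : ι → R) : Finset (ι → V) :=
  Finset.univ.filter (fun x : ι → V => ∑ i, a i • x i = 0)

lemma card_linearSolutions_mul_card_le [IsDomain R] [Module.IsTorsionFree R V]
    (a : ι → R) {i₀ : ι} (ha : a i₀ ≠ 0) :
    #(linearSolutions (V := V) a) * Fintype.card V ≤ Fintype.card V ^ Fintype.card ι := by
  have form_translate : ∀ (x : ι → V) (v : V),
      ∑ i, a i • (x + Pi.single i₀ v : ι → V) i = ∑ i, a i • x i + a i₀ • v := by
    intro x v
    simp [smul_add, Finset.sum_add_distrib, Pi.single_apply]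
  have hinj : Set.InjOn (fun xv : (ι → V) × V => xv.1 + Pi.single i₀ xv.2)
      ((linearSolutions a ×ˢ univ : Finset ((ι → V) × V)) : Set ((ι → V) × V)) := by
    rintro ⟨x, v⟩ hxv ⟨x', v'⟩ hxv' heq
    simp only [linearSolutions, coe_product, coe_filter, coe_univ, Set.mem_prod,
      Set.mem_ofPred_eq, Set.mem_univ, and_true] at hxv hxv' heq
    have hv : v = v' := smul_right_injective V ha <| by
      simpa only [form_translate, hxv, hxv', zero_add] using
        congrArg (fun y => ∑ i, a i • y i) heq
    subst hv
    simpa using heq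
  simpa [Fintype.card_fun] using Finset.card_le_card_of_injOn _ (fun _ _ => mem_univ _) hinj

variable {P M : Type*} [Fintype P] [DecidableEq P] [CommSemiring M]

lemma sum_linearSolutions_prod_eq (a : ι → R) (e : P ⊕ P ≃ ι)
    (hneg : ∀ p, a (e (.inr p)) = -a (e (.inl p))) (f : V → M) :
    ∑ x ∈ linearSolutions a, ∏ i, f (x i) =
      ∑ y : P → V, ∑ z : P → V,
        if ∑ p, a (e (.inl p)) • y p = ∑ p, a (e (.inl p)) • z p
        then (∏ p, f (y p)) * ∏ p, f (z p) else 0 := by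
  let Φ : (P → V) × (P → V) ≃ (ι → V) :=
    (Equiv.sumArrowEquivProdArrow P P V).symm.trans (e.arrowCongr (Equiv.refl V))
  have hΦ : ∀ yz s, Φ yz (e s) = Sum.elim yz.1 yz.2 s := fun yz s => by
    simp only [Φ, Equiv.trans_apply, Equiv.arrowCongr_apply, Equiv.coe_refl, Function.comp_apply,
      Equiv.symm_apply_apply, id_eq]
    rfl
  rw [linearSolutions, Finset.sum_filter, ← Φ.sum_comp, Fintype.sum_prod_type]
  refine sum_congr rfl fun y _ => sum_congr rfl fun z _ => ?_
  rw [← e.sum_comp, ← e.prod_comp, Fintype.sum_sum_type, Fintype.prod_sum_type]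
  simp only [hΦ, hneg, Sum.elim_inl, Sum.elim_inr, neg_smul, Finset.sum_neg_distrib,
    ← sub_eq_add_neg, sub_eq_zero]

theorem sidorenko_of_pairing [IsDomain R] [Module.IsTorsionFree R V] (a : ι → R) (e : P ⊕ P ≃ ι)
    (hneg : ∀ p, a (e (.inr p)) = -a (e (.inl p))) {i₀ : ι} (ha : a i₀ ≠ 0) (f : V → ℝ) :
    ((∑ v, f v) / Fintype.card V) ^ Fintype.card ι ≤
      (∑ x ∈ linearSolutions a, ∏ i, f (x i)) / #(linearSolutions (V := V) a) := by
  set D := linearSolutions (V := V) a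
  let H : V → ℝ := fun u => ∑ y : P → V with ∑ p, a (e (.inl p)) • y p = u, ∏ p, f (y p)
  have hsum : ∑ x ∈ D, ∏ i, f (x i) = ∑ u, H u ^ 2 :=
    (sum_linearSolutions_prod_eq a e hneg f).trans (sum_sum_ite_eq_sum_sq_fiberwise _ _)
  have hmass : ∑ u, H u = (∑ v, f v) ^ Fintype.card P := by
    rw [Finset.sum_fiberwise, ← Fintype.prod_sum, prod_const, card_univ]
  have hcard : Fintype.card ι = Fintype.card P * 2 := by
    simpa [mul_two] using (Fintype.card_congr e).symm
  have hCS : (∑ u, H u) ^ 2 ≤ (Fintype.card V : ℝ) * ∑ u, H u ^ 2 := by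
    simpa using sq_sum_le_card_mul_sum_sq (s := univ) (f := H)
  have hD : (#D : ℝ) * Fintype.card V ≤ (Fintype.card V : ℝ) ^ Fintype.card ι := by
    exact_mod_cast card_linearSolutions_mul_card_le a ha
  have hDpos : (0 : ℝ) < #D := by
    exact_mod_cast Finset.card_pos.mpr ⟨0, by simp [D, linearSolutions]⟩
  have hN : (0 : ℝ) < Fintype.card V := by exact_mod_cast Fintype.card_pos
  rw [hsum, div_pow, div_le_div_iff₀ (pow_pos hN _) hDpos, hcard, pow_mul, ← hmass, ← hcard]
  have hS : 0 ≤ ∑ u, H u ^ 2 := sum_nonneg fun u _ => sq_nonneg _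
  calc (∑ u, H u) ^ 2 * #D ≤ (Fintype.card V : ℝ) * (∑ u, H u ^ 2) * #D := by gcongr
    _ = (∑ u, H u ^ 2) * (#D * Fintype.card V) := by ring
    _ ≤ (∑ u, H u ^ 2) * (Fintype.card V : ℝ) ^ Fintype.card ι := by gcongr

end LinearForm

theorem stmt_0_general {F : Type} [Field F] [Fintype F] [DecidableEq F]
    (n k : ℕ) (a : Fin k → F) (ha : ∀ i, a i ≠ 0)
    (hpair : ∃ σ : Equiv.Perm (Fin k), ∀ i, σ i ≠ i ∧ σ (σ i) = i ∧ a (σ i) = - a i)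
    (f : (Fin n → F) → ℝ) :
    (∑ x ∈ Finset.univ.filter
        (fun x : Fin k → (Fin n → F) => ∑ i, a i • x i = 0), ∏ i, f (x i)) /
      ((Finset.univ.filter
        (fun x : Fin k → (Fin n → F) => ∑ i, a i • x i = 0)).card : ℝ)
    ≥ ((∑ v, f v) / (Fintype.card (Fin n → F) : ℝ)) ^ k := by
  obtain ⟨σ, hσ⟩ := hpair
  rcases k.eq_zero_or_pos with rfl | hk
  · simp
  have := sidorenko_of_pairing a
    (involutionPairEquiv σ (fun i => (hσ i).2.1) (fun i => (hσ i).1)) (fun p => (hσ p).2.2)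
    (ha ⟨0, hk⟩) f
  rwa [Fintype.card_fin] at this

/-- If the nonzero coefficients `a₁, …, a_k ∈ F_q` can be partitioned into pairs each summing
to zero (witnessed by a fixed-point-free involution `σ` with `a (σ i) = -a i`), then the
equation `a₁x₁ + ⋯ + a_kx_k = 0` is Sidorenko: for every `f : F_q^n → [0,1]`, the average of
`f(x₁)⋯f(x_k)` over solutions is at least `(E f)^k`. -/
theorem stmt_0 {F : Type} [Field F] [Fintype F] [DecidableEq F]
    (n k : ℕ) (hn : 1 ≤ n) (a : Fin k → F) (ha : ∀ i, a i ≠ 0)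
    (hpair : ∃ σ : Equiv.Perm (Fin k), ∀ i, σ i ≠ i ∧ σ (σ i) = i ∧ a (σ i) = - a i)
    (f : (Fin n → F) → ℝ) (hf : ∀ v, f v ∈ Set.Icc (0 : ℝ) 1) :
    (∑ x ∈ Finset.univ.filter
        (fun x : Fin k → (Fin n → F) => ∑ i, a i • x i = 0), ∏ i, f (x i)) /
      ((Finset.univ.filter
        (fun x : Fin k → (Fin n → F) => ∑ i, a i • x i = 0)).card : ℝ)
    ≥ ((∑ v, f v) / (Fintype.card (Fin n → F) : ℝ)) ^ k :=
  stmt_0_general n k a ha hpair f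
end

section
/- Let L(x₁,…,x_k) = a₁x₁+⋯+a_kx_k with a₁,…,a_k ∈ F_q nonzero, and suppose k is odd. Then for every n and every two-coloring of F_q^n, the number of monochromatic solutions (x₁,…,x_k) ∈ (F_q^n)^k to L(x₁,…,x_k)=0 is at least 2^{1−k} q^{n(k−1)}. -/
open Finset

-- generic lemma: sum over all functions of product over a subset of coordinates
lemma sum_prod_free {ι V : Type*} [Fintype ι] [Fintype V] [DecidableEq ι] (T : Finset ι)
    (h : V → ℝ) :
    ∑ y : ι → V, ∏ i ∈ T, h (y i)
      = (∑ v, h v) ^ T.card * (Fintype.card V : ℝ) ^ (Fintype.card ι - T.card) := by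
  have key : ∀ y : ι → V, ∏ i ∈ T, h (y i)
      = ∏ i : ι, (fun i v => if i ∈ T then h v else 1) i (y i) := by
    intro y
    rw [← Finset.prod_filter]
    congr 1
    simp
  simp_rw [key]
  rw [← Fintype.piFinset_univ]
  rw [← Finset.prod_univ_sum (fun _ : ι => (univ : Finset V))
    (fun i v => if i ∈ T then h v else 1)]
  have : ∀ i : ι, (∑ v : V, if i ∈ T then h v else 1)
      = if i ∈ T then (∑ v, h v) else (Fintype.card V : ℝ) := by
    intro i
    split <;> simp [Finset.card_univ]
  simp_rw [this]
  rw [Finset.prod_ite, Finset.prod_const, Finset.prod_const]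
  have h1 : #(filter (fun x => x ∈ T) univ) = T.card := by simp
  have h2 : #(filter (fun x => x ∉ T) univ) = Fintype.card ι - T.card := by
    rw [Finset.filter_not, Finset.card_sdiff_of_subset (Finset.subset_univ _), Finset.card_univ, h1]
  rw [h1, h2]

lemma split_sum_at {k : ℕ} (j : Fin k) {M : Type*} [AddCommMonoid M] (g : Fin k → M) :
    ∑ i, g i = g j + ∑ i' : {i : Fin k // i ≠ j}, g i' := by
  rw [Fintype.sum_eq_add_sum_compl j g]
  congr 1
  exact Finset.sum_subtype _ (by simp) g

def extSol {F : Type} [Field F] {n k : ℕ} (a : Fin k → F) (j : Fin k)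
    (y : {i : Fin k // i ≠ j} → (Fin n → F)) : Fin k → (Fin n → F) :=
  fun i => if h : i = j then -(a j)⁻¹ • (∑ i' : {i : Fin k // i ≠ j}, a i' • y i') else y ⟨i, h⟩

lemma extSol_ne {F : Type} [Field F] {n k : ℕ} (a : Fin k → F) (j : Fin k)
    (y : {i : Fin k // i ≠ j} → (Fin n → F)) (i : Fin k) (h : i ≠ j) :
    extSol a j y i = y ⟨i, h⟩ := by
  simp [extSol, h]

lemma extSol_solution {F : Type} [Field F] {n k : ℕ} (a : Fin k → F) (j : Fin k)
    (haj : a j ≠ 0) (y : {i : Fin k // i ≠ j} → (Fin n → F)) :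
    ∑ i, a i • extSol a j y i = 0 := by
  rw [split_sum_at j]
  have h1 : extSol a j y j = -(a j)⁻¹ • (∑ i' : {i : Fin k // i ≠ j}, a i' • y i') := by
    simp [extSol]
  have h2 : ∀ i' : {i : Fin k // i ≠ j}, extSol a j y i' = y i' := fun i' =>
    extSol_ne a j y i' i'.2
  rw [h1]
  simp only [h2]
  rw [smul_smul, mul_neg, mul_inv_cancel₀ haj, neg_one_smul]
  exact neg_add_cancel _

lemma extSol_restrict {F : Type} [Field F] {n k : ℕ} (a : Fin k → F) (j : Fin k)
    (haj : a j ≠ 0) (x : Fin k → (Fin n → F)) (hx : ∑ i, a i • x i = 0) :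
    extSol a j (fun i' => x i'.1) = x := by
  funext i
  by_cases h : i = j
  · subst h
    have hsplit := split_sum_at i (fun i' => a i' • x i')
    rw [hx] at hsplit
    have hS : ∑ i' : {i' : Fin k // i' ≠ i}, a i'.1 • x i'.1 = -(a i • x i) :=
      eq_neg_of_add_eq_zero_right hsplit.symm
    show (if h : i = i then -(a i)⁻¹ • (∑ i' : {i' : Fin k // i' ≠ i}, a i'.1 • x i'.1)
        else x i) = x i
    rw [dif_pos rfl, hS, smul_neg, neg_smul, neg_neg, smul_smul, inv_mul_cancel₀ haj, one_smul]
  · exact extSol_ne a j _ i h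

lemma sum_sol {F : Type} [Field F] [Fintype F] [DecidableEq F] {n k : ℕ} (a : Fin k → F)
    (j : Fin k) (haj : a j ≠ 0) (g : (Fin k → (Fin n → F)) → ℝ) :
    ∑ x ∈ Finset.univ.filter (fun x : Fin k → (Fin n → F) => ∑ i, a i • x i = 0), g x
      = ∑ y : {i : Fin k // i ≠ j} → (Fin n → F), g (extSol a j y) := by
  apply Finset.sum_nbij' (i := fun x => fun i' : {i : Fin k // i ≠ j} => x i'.1)
    (j := fun y => extSol a j y)
  · intro x hx
    exact Finset.mem_univ _
  · intro y hy
    simp only [Finset.mem_filter, Finset.mem_univ, true_and]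
    exact extSol_solution a j haj y
  · intro x hx
    simp only [Finset.mem_filter, Finset.mem_univ, true_and] at hx
    exact extSol_restrict a j haj x hx
  · intro y hy
    funext i'
    exact extSol_ne a j y i'.1 i'.2
  · intro x hx
    simp only [Finset.mem_filter, Finset.mem_univ, true_and] at hx
    rw [extSol_restrict a j haj x hx]

lemma lambda_eq {F : Type} [Field F] [Fintype F] [DecidableEq F] {n k : ℕ} (a : Fin k → F)
    (j : Fin k) (haj : a j ≠ 0) (S : Finset (Fin k)) (hjS : j ∉ S) (h : (Fin n → F) → ℝ) :
    ∑ x ∈ Finset.univ.filter (fun x : Fin k → (Fin n → F) => ∑ i, a i • x i = 0),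
        ∏ i ∈ S, h (x i)
      = (∑ v, h v) ^ S.card
          * (Fintype.card (Fin n → F) : ℝ) ^ (Fintype.card {i : Fin k // i ≠ j} - S.card) := by
  rw [sum_sol a j haj]
  set T : Finset {i : Fin k // i ≠ j} := Finset.univ.filter (fun i' => i'.1 ∈ S) with hT
  have hprod : ∀ y : {i : Fin k // i ≠ j} → (Fin n → F),
      ∏ i ∈ S, h (extSol a j y i) = ∏ i' ∈ T, h (y i') := by
    intro y
    refine Finset.prod_bij'
      (fun i hi => (⟨i, fun hij => hjS (hij ▸ hi)⟩ : {i : Fin k // i ≠ j}))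
      (fun i' _ => i'.1) (fun i hi => ?_) (fun i' hi' => ?_) (fun i hi => rfl)
      (fun i' hi' => rfl) (fun i hi => ?_)
    · simp only [hT, Finset.mem_filter, Finset.mem_univ, true_and]
      exact hi
    · simp only [hT, Finset.mem_filter] at hi'
      exact hi'.2
    · rw [extSol_ne a j y i (fun hij => hjS (hij ▸ hi))]
  simp_rw [hprod]
  rw [sum_prod_free T h]
  have hcard : T.card = S.card := by
    refine Finset.card_bij' (fun i' _ => i'.1)
      (fun i hi => (⟨i, fun hij => hjS (hij ▸ hi)⟩ : {i : Fin k // i ≠ j}))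
      (fun i' hi' => ?_) (fun i hi => ?_) (fun i' hi' => rfl) (fun i hi => rfl)
    · simp only [hT, Finset.mem_filter] at hi'
      exact hi'.2
    · simp only [hT, Finset.mem_filter, Finset.mem_univ, true_and]
      exact hi
  rw [hcard]

lemma lambda_card {k : ℕ} (j : Fin k) :
    Fintype.card {i : Fin k // i ≠ j} = k - 1 := by
  simp [Fintype.card_subtype_compl]

/-- If `k` is odd and all coefficients are nonzero, then the equation
`a₁x₁ + ⋯ + a_kx_k = 0` is common: every two-coloring of `F_q^n` has at least
`2^{1-k} q^{n(k-1)}` monochromatic solutions. -/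
theorem stmt_2 {F : Type} [Field F] [Fintype F] [DecidableEq F]
    (n k : ℕ) (hk : Odd k) (a : Fin k → F) (ha : ∀ i, a i ≠ 0)
    (c : (Fin n → F) → Bool) :
    ((Finset.univ.filter (fun x : Fin k → (Fin n → F) =>
        (∑ i, a i • x i = 0) ∧ ∀ i j, c (x i) = c (x j))).card : ℝ)
      ≥ (2 : ℝ) ^ ((1 : ℤ) - k) * (Fintype.card F : ℝ) ^ (n * (k - 1)) := by
  classical
  have hk0 : 0 < k := hk.pos
  set f : (Fin n → F) → ℝ := fun v => if c v then 1 else -1 with hf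
  set Sol : Finset (Fin k → (Fin n → F)) :=
    Finset.univ.filter (fun x => ∑ i, a i • x i = 0) with hSol
  let j0 : Fin k := ⟨0, hk0⟩
  have hcardV : (Fintype.card (Fin n → F) : ℝ) = (Fintype.card F : ℝ) ^ n := by
    rw [Fintype.card_fun]
    push_cast
    simp
  -- pointwise identity
  have key : ∀ x : Fin k → (Fin n → F),
      ((∏ i, (1 + f (x i))) + ∏ i, (1 - f (x i)))
        = if (∀ i j, c (x i) = c (x j)) then (2:ℝ)^k else 0 := by
    intro x
    by_cases hmono : ∀ i j, c (x i) = c (x j)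
    · rw [if_pos hmono]
      cases hb : c (x j0) with
      | true =>
        have hall : ∀ i, f (x i) = 1 := fun i => by
          rw [hf]; simp only [hmono i j0, hb, if_true]
        simp only [hall]
        norm_num [zero_pow hk0.ne']
      | false =>
        have hall : ∀ i, f (x i) = -1 := fun i => by
          rw [hf]; simp only [hmono i j0, hb]; norm_num
        simp only [hall]
        norm_num [zero_pow hk0.ne']
    · rw [if_neg hmono]
      push_neg at hmono
      obtain ⟨i0, j1, hij⟩ := hmono
      have hex : ∃ it jf, c (x it) = true ∧ c (x jf) = false := by
        cases hci : c (x i0)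
        · cases hcj : c (x j1)
          · rw [hci, hcj] at hij; exact absurd rfl hij
          · exact ⟨j1, i0, hcj, hci⟩
        · cases hcj : c (x j1)
          · exact ⟨i0, j1, hci, hcj⟩
          · rw [hci, hcj] at hij; exact absurd rfl hij
      obtain ⟨it, jf, hit, hjf⟩ := hex
      have h1 : ∏ i, (1 + f (x i)) = 0 :=
        Finset.prod_eq_zero (Finset.mem_univ jf) (by simp [hf, hjf])
      have h2 : ∏ i, (1 - f (x i)) = 0 :=
        Finset.prod_eq_zero (Finset.mem_univ it) (by simp [hf, hit])
      rw [h1, h2, add_zero]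
  -- expansion over subsets
  have expand : ∀ x : Fin k → (Fin n → F),
      ((∏ i, (1 + f (x i))) + ∏ i, (1 - f (x i)))
        = ∑ t ∈ (Finset.univ : Finset (Fin k)).powerset,
            (1 + (-1:ℝ)^t.card) * ∏ i ∈ t, f (x i) := by
    intro x
    have h1 : ∏ i, (1 + f (x i))
        = ∑ t ∈ (Finset.univ : Finset (Fin k)).powerset, ∏ i ∈ t, f (x i) := by
      calc ∏ i, (1 + f (x i)) = ∏ i, (f (x i) + 1) := by simp_rw [add_comm]
      _ = ∑ t ∈ (Finset.univ : Finset (Fin k)).powerset,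
            (∏ i ∈ t, f (x i)) * ∏ _i ∈ Finset.univ \ t, (1:ℝ) :=
        Finset.prod_add _ _ _
      _ = _ := by simp
    have h2 : ∏ i, (1 - f (x i))
        = ∑ t ∈ (Finset.univ : Finset (Fin k)).powerset,
            (-1:ℝ)^t.card * ∏ i ∈ t, f (x i) := by
      calc ∏ i, (1 - f (x i)) = ∏ i, (-f (x i) + 1) := by simp_rw [neg_add_eq_sub]
      _ = ∑ t ∈ (Finset.univ : Finset (Fin k)).powerset,
            (∏ i ∈ t, -f (x i)) * ∏ _i ∈ Finset.univ \ t, (1:ℝ) :=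
        Finset.prod_add _ _ _
      _ = _ := by
        refine Finset.sum_congr rfl fun t _ => ?_
        simp_rw [← neg_one_mul (f _)]
        rw [Finset.prod_mul_distrib, Finset.prod_const, Finset.prod_const_one, mul_one]
    rw [h1, h2, ← Finset.sum_add_distrib]
    exact Finset.sum_congr rfl fun t _ => by ring
  -- counting identity
  have count : ((Finset.univ.filter (fun x : Fin k → (Fin n → F) =>
        (∑ i, a i • x i = 0) ∧ ∀ i j, c (x i) = c (x j))).card : ℝ) * 2^k
      = ∑ x ∈ Sol, ((∏ i, (1 + f (x i))) + ∏ i, (1 - f (x i))) := by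
    rw [Finset.sum_congr rfl fun x _ => key x]
    rw [← Finset.sum_filter, Finset.sum_const, nsmul_eq_mul]
    rw [hSol, Finset.filter_filter]
  -- Λ computation
  have hlam : ∀ t : Finset (Fin k), Even t.card →
      ∑ x ∈ Sol, ∏ i ∈ t, f (x i)
        = (∑ v, f v)^t.card * (Fintype.card (Fin n → F) : ℝ)^(k - 1 - t.card) := by
    intro t ht
    have htu : t ≠ Finset.univ := by
      intro h
      rw [h, Finset.card_univ, Fintype.card_fin] at ht
      exact (Nat.not_even_iff_odd.2 hk) ht
    obtain ⟨j, hj⟩ : ∃ j, j ∉ t := by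
      by_contra hc
      push_neg at hc
      exact htu (Finset.eq_univ_iff_forall.2 hc)
    rw [hSol, lambda_eq a j (ha j) t hj f, lambda_card]
  -- main rearranged sum
  have main : ∑ x ∈ Sol, ((∏ i, (1 + f (x i))) + ∏ i, (1 - f (x i)))
      = ∑ t ∈ (Finset.univ : Finset (Fin k)).powerset,
          (1 + (-1:ℝ)^t.card) * ∑ x ∈ Sol, ∏ i ∈ t, f (x i) := by
    rw [Finset.sum_congr rfl fun x _ => expand x]
    rw [Finset.sum_comm]
    exact Finset.sum_congr rfl fun t _ => (Finset.mul_sum _ _ _).symm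
  -- nonnegativity of each term
  have hnn : ∀ t ∈ (Finset.univ : Finset (Fin k)).powerset,
      0 ≤ (1 + (-1:ℝ)^t.card) * ∑ x ∈ Sol, ∏ i ∈ t, f (x i) := by
    intro t _
    rcases Nat.even_or_odd t.card with he | ho
    · rw [hlam t he, he.neg_one_pow]
      have h1 : (0:ℝ) ≤ (∑ v, f v)^t.card := he.pow_nonneg _
      have h2 : (0:ℝ) ≤ (Fintype.card (Fin n → F) : ℝ)^(k - 1 - t.card) := by positivity
      nlinarith
    · rw [ho.neg_one_pow]
      norm_num
  -- lower bound via the empty set term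
  have hlower : (2:ℝ) * (Fintype.card (Fin n → F) : ℝ)^(k - 1)
      ≤ ∑ t ∈ (Finset.univ : Finset (Fin k)).powerset,
          (1 + (-1:ℝ)^t.card) * ∑ x ∈ Sol, ∏ i ∈ t, f (x i) := by
    have hmem : (∅ : Finset (Fin k)) ∈ (Finset.univ : Finset (Fin k)).powerset :=
      Finset.empty_mem_powerset _
    have := Finset.single_le_sum hnn hmem
    rw [hlam ∅ (by simp)] at this
    norm_num at this
    simpa [hcardV] using this
  have h2k : (0:ℝ) < 2^k := by positivity
  rw [ge_iff_le]
  have hrhs : (2:ℝ) ^ ((1:ℤ) - k) * (Fintype.card F : ℝ) ^ (n * (k - 1))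
      = 2 * (Fintype.card (Fin n → F) : ℝ)^(k - 1) / 2^k := by
    rw [zpow_sub₀ (by norm_num : (2:ℝ) ≠ 0), zpow_one, zpow_natCast, hcardV, ← pow_mul]
    ring
  rw [hrhs, div_le_iff₀ h2k]
  calc 2 * (Fintype.card (Fin n → F) : ℝ)^(k - 1)
      ≤ ∑ t ∈ (Finset.univ : Finset (Fin k)).powerset,
          (1 + (-1:ℝ)^t.card) * ∑ x ∈ Sol, ∏ i ∈ t, f (x i) := hlower
  _ = ∑ x ∈ Sol, ((∏ i, (1 + f (x i))) + ∏ i, (1 - f (x i))) := main.symm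
  _ = _ := count.symm
end

section
/- Let k be odd and f : F_q^n → [0,1]. If L(x₁,…,x_k)=a₁x₁+⋯+a_kx_k with all aᵢ ∈ F_q nonzero, then Λ_{L=0}(f) + Λ_{L=0}(1−f) = (E f)^k + (1 − E f)^k. In particular all Fourier contributions from nonzero frequencies cancel between f and 1−f. -/
open Finset

variable {F : Type} [Field F] [Fintype F] [DecidableEq F] {n k : ℕ}

private def SolSet (n k : ℕ) (a : Fin k → F) : Finset (Fin k → (Fin n → F)) :=
  Finset.univ.filter (fun x => ∑ i, a i • x i = 0)

private def extMap (a : Fin k → F) (j : Fin k) (y : {i : Fin k // i ≠ j} → (Fin n → F)) :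
    Fin k → (Fin n → F) :=
  fun i => if h : i = j then (-(a j)⁻¹) • ∑ i' : {i : Fin k // i ≠ j}, a i'.1 • y i'
           else y ⟨i, h⟩

theorem key_sum (a : Fin k → F) (ha : ∀ i, a i ≠ 0) (j : Fin k)
    (g : Fin k → (Fin n → F) → ℝ) (hgj : ∀ v, g j v = 1) :
    ∑ x ∈ SolSet n k a, ∏ i, g i (x i) = ∏ i ∈ univ.erase j, ∑ v, g i v := by
  have hsub : ∀ (x : Fin k → (Fin n → F)),
      ∑ i ∈ univ.erase j, a i • x i = ∑ i' : {i : Fin k // i ≠ j}, a i'.1 • x i'.1 := by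
    intro x
    rw [Finset.sum_subtype]
    intro i; simp [Finset.mem_erase]
  have hrhs : ∏ i ∈ univ.erase j, ∑ v, g i v
      = ∑ y ∈ (univ : Finset ({i : Fin k // i ≠ j} → (Fin n → F))), ∏ i', g i'.1 (y i') := by
    rw [Finset.prod_subtype (p := fun i => i ≠ j)]
    · rw [Finset.prod_univ_sum]
      rw [Fintype.piFinset_univ]
    · intro i; simp [Finset.mem_erase]
  rw [hrhs]
  refine Finset.sum_nbij' (fun x => fun i' => x i'.1) (extMap a j) ?_ ?_ ?_ ?_ ?_
  · intro x hx; exact Finset.mem_univ _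
  · -- extMap lands in SolSet
    intro y hy
    simp only [SolSet, Finset.mem_filter, Finset.mem_univ, true_and]
    rw [← Finset.sum_erase_add _ _ (Finset.mem_univ j)]
    have h1 : ∑ i ∈ univ.erase j, a i • extMap a j y i
        = ∑ i' : {i : Fin k // i ≠ j}, a i'.1 • y i' := by
      rw [hsub]
      refine Finset.sum_congr rfl ?_
      intro i' _
      have : extMap a j y i'.1 = y i' := by
        simp [extMap, i'.2]
      rw [this]
    have h2 : a j • extMap a j y j = -(∑ i' : {i : Fin k // i ≠ j}, a i'.1 • y i') := by
      have hval : extMap a j y j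
          = (-(a j)⁻¹) • ∑ i' : {i : Fin k // i ≠ j}, a i'.1 • y i' := dif_pos rfl
      rw [hval, smul_smul, mul_neg, mul_inv_cancel₀ (ha j), neg_one_smul]
    rw [h1, h2]; simp
  · -- left inverse
    intro x hx
    simp only [SolSet, Finset.mem_filter, Finset.mem_univ, true_and] at hx
    funext i
    by_cases h : i = j
    · subst h
      have hsum : ∑ i' : {i' : Fin k // i' ≠ i}, a i'.1 • x i'.1 = -(a i • x i) := by
        rw [← hsub]
        have h := Finset.sum_erase_add univ (fun i' => a i' • x i') (Finset.mem_univ i)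
        rw [hx] at h
        exact eq_neg_of_add_eq_zero_left h
      have hval : extMap a i (fun i' => x i'.1) i
          = (-(a i)⁻¹) • ∑ i' : {i' : Fin k // i' ≠ i}, a i'.1 • x i'.1 := dif_pos rfl
      rw [hval, hsum, smul_neg, neg_smul, neg_neg, smul_smul, inv_mul_cancel₀ (ha i),
        one_smul]
    · simp [extMap, h]
  · intro y hy
    funext i'
    simp [extMap, i'.2]
  · intro x hx
    rw [← Finset.prod_erase (univ : Finset (Fin k)) (f := fun i => g i (x i)) (hgj (x j))]
    rw [Finset.prod_subtype (p := fun i => i ≠ j)]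
    intro i; simp [Finset.mem_erase]

theorem card_solset (a : Fin k → F) (ha : ∀ i, a i ≠ 0) (hk : 0 < k) :
    ((SolSet n k a).card : ℝ) = (Fintype.card (Fin n → F) : ℝ) ^ (k - 1) := by
  have h := key_sum (n := n) a ha ⟨0, hk⟩ (fun _ _ => (1:ℝ)) (fun _ => rfl)
  simp only [Finset.prod_const_one, Finset.sum_const, nsmul_eq_mul, mul_one,
    Finset.sum_const, Finset.prod_const] at h
  rw [h]
  simp [Finset.card_univ, Finset.card_erase_of_mem]

theorem sub_sum (a : Fin k → F) (ha : ∀ i, a i ≠ 0) (T : Finset (Fin k)) (hT : T ≠ univ)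
    (f : (Fin n → F) → ℝ) :
    ∑ x ∈ SolSet n k a, ∏ i ∈ T, f (x i)
      = (∑ v, f v) ^ T.card * (Fintype.card (Fin n → F) : ℝ) ^ (k - 1 - T.card) := by
  have hss : T ⊂ univ := lt_of_le_of_ne (Finset.subset_univ T) hT
  obtain ⟨j, -, hjT⟩ := Finset.exists_of_ssubset hss
  have h := key_sum a ha j (fun i v => if i ∈ T then f v else 1)
    (fun v => if_neg hjT)
  have hL : ∀ x : Fin k → (Fin n → F),
      (∏ i, if i ∈ T then f (x i) else 1) = ∏ i ∈ T, f (x i) := by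
    intro x
    rw [Finset.prod_ite_mem, Finset.univ_inter]
  have hTsub : T ⊆ univ.erase j := fun i hi =>
    Finset.mem_erase.2 ⟨fun hij => hjT (hij ▸ hi), Finset.mem_univ i⟩
  calc ∑ x ∈ SolSet n k a, ∏ i ∈ T, f (x i)
      = ∑ x ∈ SolSet n k a, ∏ i, if i ∈ T then f (x i) else 1 :=
        Finset.sum_congr rfl (fun x _ => (hL x).symm)
    _ = ∏ i ∈ univ.erase j, ∑ v, if i ∈ T then f v else 1 := h
    _ = ∏ i ∈ univ.erase j, (if i ∈ T then ∑ v, f v else (Fintype.card (Fin n → F) : ℝ)) := by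
        refine Finset.prod_congr rfl (fun i _ => ?_)
        split
        · rfl
        · simp
    _ = _ := by
        have hfilt : (univ.erase j).filter (fun i => i ∈ T) = T :=
          Finset.filter_mem_eq_inter.trans (by rw [Finset.inter_eq_right.2 hTsub])
        rw [Finset.prod_ite, Finset.prod_const, Finset.prod_const, hfilt,
          Finset.filter_not, hfilt, Finset.card_sdiff_of_subset hTsub,
          Finset.card_erase_of_mem (Finset.mem_univ _), Finset.card_univ, Fintype.card_fin]

theorem expand_prod {k : ℕ} (h : Fin k → ℝ) :
    ∏ i, (1 - h i) = ∑ T ∈ (univ : Finset (Fin k)).powerset,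
      (-1 : ℝ) ^ T.card * ∏ i ∈ T, h i := by
  have hh := Finset.prod_add (fun i => -h i) (fun _ => (1:ℝ)) univ
  simp only [Finset.prod_const_one, mul_one] at hh
  calc ∏ i, (1 - h i) = ∏ i, (-h i + 1) := by
        exact Finset.prod_congr rfl (fun i _ => by ring)
    _ = ∑ T ∈ (univ : Finset (Fin k)).powerset, ∏ i ∈ T, (-h i) := hh
    _ = _ := by
        refine Finset.sum_congr rfl (fun T _ => ?_)
        rw [show (fun i => -h i) = (fun i => (-1) * h i) from funext (fun i => by ring),
          Finset.prod_mul_distrib, Finset.prod_const]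

theorem one_sub_pow {k : ℕ} (c : ℝ) :
    (1 - c) ^ k = ∑ T ∈ (univ : Finset (Fin k)).powerset, (-1 : ℝ) ^ T.card * c ^ T.card := by
  have h := expand_prod (fun _ : Fin k => c)
  simp only [Finset.prod_const, Finset.card_univ, Fintype.card_fin] at h
  exact h


/-- For odd `k` and nonzero coefficients, the exact cancellation identity
`Λ_{L=0}(f) + Λ_{L=0}(1-f) = (E f)^k + (1 - E f)^k` holds for every `f : F_q^n → [0,1]`. -/
theorem stmt_3 {F : Type} [Field F] [Fintype F] [DecidableEq F]
    (n k : ℕ) (hk : Odd k) (a : Fin k → F) (ha : ∀ i, a i ≠ 0)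
    (f : (Fin n → F) → ℝ) (hf : ∀ v, f v ∈ Set.Icc (0 : ℝ) 1) :
    (∑ x ∈ Finset.univ.filter
        (fun x : Fin k → (Fin n → F) => ∑ i, a i • x i = 0), ∏ i, f (x i)) /
      ((Finset.univ.filter
        (fun x : Fin k → (Fin n → F) => ∑ i, a i • x i = 0)).card : ℝ)
    + (∑ x ∈ Finset.univ.filter
        (fun x : Fin k → (Fin n → F) => ∑ i, a i • x i = 0), ∏ i, (1 - f (x i))) /
      ((Finset.univ.filter
        (fun x : Fin k → (Fin n → F) => ∑ i, a i • x i = 0)).card : ℝ)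
    = ((∑ v, f v) / (Fintype.card (Fin n → F) : ℝ)) ^ k
      + (1 - (∑ v, f v) / (Fintype.card (Fin n → F) : ℝ)) ^ k := by
  have hS : (Finset.univ.filter
      (fun x : Fin k → (Fin n → F) => ∑ i, a i • x i = 0)) = SolSet n k a := rfl
  rw [hS]
  have hq0 : ((Fintype.card (Fin n → F) : ℝ)) ≠ 0 := Nat.cast_ne_zero.2 Fintype.card_ne_zero
  have hN := card_solset (n := n) a ha hk.pos
  have huniv : (univ : Finset (Fin k)) ∈ (univ : Finset (Fin k)).powerset :=
    Finset.mem_powerset_self _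
  have hB : ∑ x ∈ SolSet n k a, ∏ i, (1 - f (x i))
      = ∑ T ∈ (univ : Finset (Fin k)).powerset,
          (-1:ℝ)^T.card * ∑ x ∈ SolSet n k a, ∏ i ∈ T, f (x i) := by
    calc ∑ x ∈ SolSet n k a, ∏ i, (1 - f (x i))
        = ∑ x ∈ SolSet n k a, ∑ T ∈ (univ : Finset (Fin k)).powerset,
            (-1:ℝ)^T.card * ∏ i ∈ T, f (x i) :=
          Finset.sum_congr rfl (fun x _ => expand_prod (fun i => f (x i)))
      _ = ∑ T ∈ (univ : Finset (Fin k)).powerset, ∑ x ∈ SolSet n k a,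
            (-1:ℝ)^T.card * ∏ i ∈ T, f (x i) := Finset.sum_comm
      _ = _ := Finset.sum_congr rfl (fun T _ => (Finset.mul_sum _ _ _).symm)
  have hA : ∑ x ∈ SolSet n k a, ∏ i, f (x i) + ∑ x ∈ SolSet n k a, ∏ i, (1 - f (x i))
      = ∑ T ∈ ((univ : Finset (Fin k)).powerset).erase univ,
          (-1:ℝ)^T.card * ∑ x ∈ SolSet n k a, ∏ i ∈ T, f (x i) := by
    rw [hB, ← Finset.sum_erase_add _ _ huniv]
    simp only [Finset.card_univ, Fintype.card_fin]
    rw [hk.neg_one_pow]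
    ring
  have hdiv : (∑ T ∈ ((univ : Finset (Fin k)).powerset).erase univ,
        (-1:ℝ)^T.card * ∑ x ∈ SolSet n k a, ∏ i ∈ T, f (x i))
        / ((SolSet n k a).card : ℝ)
      = ∑ T ∈ ((univ : Finset (Fin k)).powerset).erase univ,
        (-1:ℝ)^T.card * ((∑ v, f v) / (Fintype.card (Fin n → F) : ℝ)) ^ T.card := by
    rw [Finset.sum_div]
    refine Finset.sum_congr rfl (fun T hT => ?_)
    have hTne : T ≠ univ := (Finset.mem_erase.1 hT).1
    have hTc : T.card ≤ k - 1 := by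
      have h1 : T.card < k := by
        have := Finset.card_lt_card (lt_of_le_of_ne (Finset.subset_univ T) hTne)
        simpa using this
      omega
    rw [sub_sum a ha T hTne f, hN,
      show (Fintype.card (Fin n → F) : ℝ) ^ (k-1)
          = (Fintype.card (Fin n → F) : ℝ) ^ T.card
            * (Fintype.card (Fin n → F) : ℝ) ^ (k - 1 - T.card) from by
        rw [← pow_add]; congr 1; omega,
      mul_div_assoc, mul_div_mul_right _ _ (pow_ne_zero _ hq0), div_pow]
  rw [← add_div, hA, hdiv,
    one_sub_pow (k := k) ((∑ v, f v) / (Fintype.card (Fin n → F) : ℝ)),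
    ← Finset.sum_erase_add _ _ huniv]
  simp only [Finset.card_univ, Fintype.card_fin]
  rw [hk.neg_one_pow]
  ring
end

section
/- Let k be even and a₁,…,a_k ∈ F_q \ {0} such that the multiset {a₁,…,a_k} cannot be partitioned into pairs each summing to zero. If ξ_r (r ∈ F_q \ {0}) are independent uniform random unit complex numbers subject only to ξ_{−r} = conj(ξ_r) (for q odd; for q even, independent uniform signs ±1), then for each fixed nonzero r, the expectation of ξ_{a₁r}·ξ_{a₂r}⋯ξ_{a_kr} is zero. -/
open Finset MeasureTheory ProbabilityTheory

lemma aux_integral_circle (p m : ℕ) (hpm : p ≠ m) :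
    ∫ θ in Set.Ico (0:ℝ) (2*Real.pi),
      (Complex.exp (θ * Complex.I))^p * (starRingEnd ℂ) (Complex.exp (θ * Complex.I))^m = 0 := by
  have key : ∀ θ : ℝ, (Complex.exp (θ * Complex.I))^p
      * (starRingEnd ℂ) (Complex.exp (θ * Complex.I))^m
      = Complex.exp ((((p:ℂ) - m) * Complex.I) * θ) := by
    intro θ
    have h1 : (starRingEnd ℂ) (Complex.exp (θ * Complex.I))
        = Complex.exp (-(θ * Complex.I)) := by
      rw [← Complex.exp_conj]
      congr 1
      simp [Complex.conj_I]
    rw [h1, ← Complex.exp_nat_mul, ← Complex.exp_nat_mul, ← Complex.exp_add]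
    congr 1
    push_cast
    ring
  simp only [key]
  have hc : ((p:ℂ) - m) * Complex.I ≠ 0 := by
    apply mul_ne_zero _ Complex.I_ne_zero
    rw [sub_ne_zero]
    exact_mod_cast hpm
  rw [setIntegral_congr_set MeasureTheory.Ico_ae_eq_Ioc,
    ← intervalIntegral.integral_of_le (by positivity : (0:ℝ) ≤ 2*Real.pi),
    integral_exp_mul_complex hc]
  have h2 : ((p:ℂ) - m) * Complex.I * (2*Real.pi) = ((p:ℤ) - (m:ℤ)) * (2 * Real.pi * Complex.I) := by
    push_cast; ring
  push_cast
  have h3 : Complex.exp (((p:ℂ) - m) * Complex.I * (2 * Real.pi)) = 1 := by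
    rw [← Complex.exp_int_mul_two_pi_mul_I ((p:ℤ) - m)]
    congr 1
    push_cast
    ring
  rw [h3]
  simp

lemma indepFun_integral_mul_complex {Ω : Type*} [MeasurableSpace Ω] {μ : Measure Ω}
    [IsProbabilityMeasure μ] {X Y : Ω → ℂ} (h : IndepFun X Y μ)
    (hX : Measurable X) (hY : Measurable Y)
    (hbX : ∀ ω, ‖X ω‖ ≤ 1) (hbY : ∀ ω, ‖Y ω‖ ≤ 1) :
    ∫ ω, X ω * Y ω ∂μ = (∫ ω, X ω ∂μ) * ∫ ω, Y ω ∂μ := by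
  have bdd : ∀ (Z : Ω → ℝ), Measurable Z → (∀ ω, |Z ω| ≤ 1) → Integrable Z μ := by
    intro Z hZ hb
    exact (integrable_const (1:ℝ)).mono' hZ.aestronglyMeasurable
      (Filter.Eventually.of_forall fun ω => by simpa using hb ω)
  have hre : ∀ ω, |(X ω).re| ≤ 1 := fun ω =>
    le_trans (Complex.abs_re_le_norm _) (hbX ω)
  have him : ∀ ω, |(X ω).im| ≤ 1 := fun ω =>
    le_trans (Complex.abs_im_le_norm _) (hbX ω)
  have hre' : ∀ ω, |(Y ω).re| ≤ 1 := fun ω =>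
    le_trans (Complex.abs_re_le_norm _) (hbY ω)
  have him' : ∀ ω, |(Y ω).im| ≤ 1 := fun ω =>
    le_trans (Complex.abs_im_le_norm _) (hbY ω)
  have mXr : Measurable fun ω => (X ω).re := Complex.measurable_re.comp hX
  have mXi : Measurable fun ω => (X ω).im := Complex.measurable_im.comp hX
  have mYr : Measurable fun ω => (Y ω).re := Complex.measurable_re.comp hY
  have mYi : Measurable fun ω => (Y ω).im := Complex.measurable_im.comp hY
  have iXr := bdd _ mXr hre
  have iXi := bdd _ mXi him
  have iYr := bdd _ mYr hre'
  have iYi := bdd _ mYi him'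
  have key : ∀ (f : ℂ → ℝ) (g : ℂ → ℝ), Measurable f → Measurable g →
      Integrable (fun ω => f (X ω)) μ → Integrable (fun ω => g (Y ω)) μ →
      ∫ ω, f (X ω) * g (Y ω) ∂μ = (∫ ω, f (X ω) ∂μ) * ∫ ω, g (Y ω) ∂μ := by
    intro f g hf hg hif hig
    exact h.integral_fun_comp_mul_comp hX.aemeasurable hY.aemeasurable
      hf.aestronglyMeasurable hg.aestronglyMeasurable
  have e1 := key _ _ Complex.measurable_re Complex.measurable_re iXr iYr
  have e2 := key _ _ Complex.measurable_im Complex.measurable_im iXi iYi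
  have e3 := key _ _ Complex.measurable_re Complex.measurable_im iXr iYi
  have e4 := key _ _ Complex.measurable_im Complex.measurable_re iXi iYr
  have iX : Integrable X μ := (integrable_const (1:ℝ)).mono' hX.aestronglyMeasurable
    (Filter.Eventually.of_forall fun ω => by simpa using hbX ω)
  have iY : Integrable Y μ := (integrable_const (1:ℝ)).mono' hY.aestronglyMeasurable
    (Filter.Eventually.of_forall fun ω => by simpa using hbY ω)
  have iXY : Integrable (fun ω => X ω * Y ω) μ :=
    (integrable_const (1:ℝ)).mono' (hX.mul hY).aestronglyMeasurable
      (Filter.Eventually.of_forall fun ω => by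
        simpa using mul_le_one₀ (hbX ω) (norm_nonneg _) (hbY ω))
  have ir1 : Integrable (fun ω => (X ω).re * (Y ω).re) μ := bdd _ (mXr.mul mYr)
    (fun ω => by rw [abs_mul]; exact mul_le_one₀ (hre ω) (abs_nonneg _) (hre' ω))
  have ir2 : Integrable (fun ω => (X ω).im * (Y ω).im) μ := bdd _ (mXi.mul mYi)
    (fun ω => by rw [abs_mul]; exact mul_le_one₀ (him ω) (abs_nonneg _) (him' ω))
  have ir3 : Integrable (fun ω => (X ω).re * (Y ω).im) μ := bdd _ (mXr.mul mYi)
    (fun ω => by rw [abs_mul]; exact mul_le_one₀ (hre ω) (abs_nonneg _) (him' ω))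
  have ir4 : Integrable (fun ω => (X ω).im * (Y ω).re) μ := bdd _ (mXi.mul mYr)
    (fun ω => by rw [abs_mul]; exact mul_le_one₀ (him ω) (abs_nonneg _) (hre' ω))
  have hre_eq : ∫ ω, (X ω * Y ω).re ∂μ
      = (∫ ω, (X ω).re * (Y ω).re ∂μ) - ∫ ω, (X ω).im * (Y ω).im ∂μ := by
    simp only [Complex.mul_re]
    exact integral_sub ir1 ir2
  have him_eq : ∫ ω, (X ω * Y ω).im ∂μ
      = (∫ ω, (X ω).re * (Y ω).im ∂μ) + ∫ ω, (X ω).im * (Y ω).re ∂μ := by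
    simp only [Complex.mul_im]
    exact integral_add ir3 ir4
  rw [← integral_re_add_im iXY, ← integral_re_add_im iX, ← integral_re_add_im iY]
  simp only [RCLike.re_to_complex, RCLike.im_to_complex, RCLike.I_to_complex]
  rw [hre_eq, him_eq, e1, e2, e3, e4]
  push_cast
  ring_nf
  rw [Complex.I_sq]
  ring

lemma aux_integral_indep_prod {ι Ω : Type*} [MeasurableSpace Ω] {μ : Measure Ω}
    [IsProbabilityMeasure μ] {g : ι → Ω → ℂ}
    (hind : iIndepFun (m := fun _ : ι => (inferInstance : MeasurableSpace ℂ)) g μ)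
    (hm : ∀ i, Measurable (g i)) (hb : ∀ i ω, ‖g i ω‖ ≤ 1) (s : Finset ι) :
    ∫ ω, ∏ i ∈ s, g i ω ∂μ = ∏ i ∈ s, ∫ ω, g i ω ∂μ := by
  classical
  induction s using Finset.induction_on with
  | empty => simp
  | insert j t hnotmem ih =>
    have hiP : IndepFun (g j) (fun ω => ∏ i ∈ t, g i ω) μ := by
      have := (hind.indepFun_finsetProd_of_notMem hm hnotmem).symm
      rwa [Finset.prod_fn] at this
    have hmP : Measurable (fun ω => ∏ i ∈ t, g i ω) :=
      Finset.measurable_prod t (fun i _ => hm i)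
    have hbP : ∀ ω, ‖∏ i ∈ t, g i ω‖ ≤ 1 := by
      intro ω
      rw [norm_prod]
      exact Finset.prod_le_one (fun i _ => norm_nonneg _) (fun i _ => hb i ω)
    simp only [Finset.prod_insert hnotmem]
    rw [indepFun_integral_mul_complex hiP (hm j) hmP (hb j) hbP, ih]

/-- Probabilistic heart of the non-commonness construction (odd `q` case): if `(ξ_r)_{r ≠ 0}`
are random unit complex numbers with `ξ_{-r} = conj ξ_r`, independent and uniform on the unit
circle over a set `R` of representatives of the pairs `{r, -r}`, and the even-length coefficient
list `a₁, …, a_k` admits no partition into pairs summing to zero, then for every fixed nonzero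
`r` the expectation of `ξ_{a₁r} ⋯ ξ_{a_kr}` vanishes. -/
theorem stmt_9 {F : Type} [Field F] [Fintype F] [DecidableEq F]
    (hq : Odd (Fintype.card F))
    (k : ℕ) (hk : Even k) (a : Fin k → F) (ha : ∀ i, a i ≠ 0)
    (hnopair : ¬∃ σ : Equiv.Perm (Fin k), ∀ i, σ i ≠ i ∧ σ (σ i) = i ∧ a (σ i) = - a i)
    {Ω : Type} [MeasurableSpace Ω] (μ : Measure Ω) [IsProbabilityMeasure μ]
    (ξ : F → Ω → ℂ) (hmeas : ∀ r : F, Measurable (ξ r))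
    (hunit : ∀ r : F, r ≠ 0 → ∀ ω : Ω, ‖ξ r ω‖ = 1)
    (hconj : ∀ r : F, r ≠ 0 → ∀ ω : Ω, ξ (-r) ω = (starRingEnd ℂ) (ξ r ω))
    (R : Finset F) (hR0 : (0 : F) ∉ R)
    (hRcover : ∀ r : F, r ≠ 0 → r ∈ R ∨ -r ∈ R)
    (hRdisj : ∀ r ∈ R, -r ∉ R)
    (hindep : iIndepFun (m := fun _ : R => (inferInstance : MeasurableSpace ℂ))
      (fun r : R => ξ (r : F)) μ)
    (hunif : ∀ r ∈ R, Measure.map (ξ r) μ =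
      (ENNReal.ofReal (2 * Real.pi))⁻¹ •
        Measure.map (fun θ : ℝ => Complex.exp (θ * Complex.I))
          (volume.restrict (Set.Ico (0 : ℝ) (2 * Real.pi)))) :
    ∀ r : F, r ≠ 0 → ∫ ω, ∏ i, ξ (a i * r) ω ∂μ = 0 := by
  classical
  intro r hr
  have hne : ∀ i, a i * r ≠ 0 := fun i => mul_ne_zero (ha i) hr
  have hrep : ∀ i, ∃ v : F, v ∈ R ∧ (a i * r = v ∨ a i * r = -v) := by
    intro i
    rcases hRcover _ (hne i) with h | h
    · exact ⟨a i * r, h, Or.inl rfl⟩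
    · exact ⟨-(a i * r), h, Or.inr (neg_neg _).symm⟩
  choose s hsR hsor using hrep
  have hs0 : ∀ i, s i ≠ 0 := fun i h => hR0 (h ▸ hsR i)
  have hneg : ∀ i, a i * r ≠ s i → a i * r = -(s i) := fun i h => (hsor i).resolve_left h
  set T : F → Finset (Fin k) :=
    fun v => univ.filter (fun i => s i = v ∧ a i * r = v) with hTdef
  set M : F → Finset (Fin k) :=
    fun v => univ.filter (fun i => s i = v ∧ a i * r ≠ v) with hMdef
  -- pointwise description of each factor
  have hxi : ∀ i (ω : Ω), ξ (a i * r) ω =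
      if a i * r = s i then ξ (s i) ω else (starRingEnd ℂ) (ξ (s i) ω) := by
    intro i ω
    by_cases h : a i * r = s i
    · rw [if_pos h, h]
    · rw [if_neg h, ← hconj (s i) (hs0 i) ω, ← hneg i h]
  -- the grouped factors
  set g : F → Ω → ℂ := fun v ω =>
    (ξ v ω) ^ (T v).card * ((starRingEnd ℂ) (ξ v ω)) ^ (M v).card with hgdef
  have hprod : ∀ ω : Ω, ∏ i, ξ (a i * r) ω = ∏ v ∈ R, g v ω := by
    intro ω
    rw [← Finset.prod_fiberwise_of_maps_to (fun i _ => hsR i) (fun i => ξ (a i * r) ω)]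
    refine Finset.prod_congr rfl (fun v hv => ?_)
    have hv0 : v ≠ 0 := fun h => hR0 (h ▸ hv)
    calc ∏ i ∈ univ.filter (fun i => s i = v), ξ (a i * r) ω
        = (∏ i ∈ (univ.filter (fun i => s i = v)).filter (fun i => a i * r = v),
            ξ (a i * r) ω)
          * ∏ i ∈ (univ.filter (fun i => s i = v)).filter (fun i => ¬ a i * r = v),
            ξ (a i * r) ω := (Finset.prod_filter_mul_prod_filter_not _ _ _).symm
      _ = g v ω := by
          rw [Finset.filter_filter, Finset.filter_filter]
          congr 1
          · rw [Finset.prod_congr rfl (fun i hi => ?_), Finset.prod_const]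
            obtain ⟨-, h1, h2⟩ := Finset.mem_filter.mp hi
            rw [h2]
          · rw [Finset.prod_congr rfl (fun i hi => ?_), Finset.prod_const]
            obtain ⟨-, h1, h2⟩ := Finset.mem_filter.mp hi
            have h3 : a i * r = -(s i) := hneg i (h1 ▸ h2)
            rw [h3, h1, hconj v hv0 ω]
  by_cases hAll : ∀ v ∈ R, (T v).card = (M v).card
  · -- build the forbidden pairing
    exfalso
    have hcard : ∀ v : F, (T v).card = (M v).card := by
      intro v
      by_cases hv : v ∈ R
      · exact hAll v hv
      · have h1 : T v = ∅ := Finset.filter_eq_empty_iff.mpr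
          (fun i _ h => hv (h.1 ▸ hsR i))
        have h2 : M v = ∅ := Finset.filter_eq_empty_iff.mpr
          (fun i _ h => hv (h.1 ▸ hsR i))
        rw [h1, h2]
    have E : ∀ v : F, (T v : Type) ≃ (M v : Type) := fun v =>
      Finset.equivOfCardEq (hcard v)
    have hiT : ∀ i, a i * r = s i → i ∈ T (s i) := fun i h =>
      Finset.mem_filter.mpr ⟨Finset.mem_univ _, rfl, h⟩
    have hiM : ∀ i, ¬ a i * r = s i → i ∈ M (s i) := fun i h =>
      Finset.mem_filter.mpr ⟨Finset.mem_univ _, rfl, h⟩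
    set f : Fin k → Fin k := fun i =>
      if h : a i * r = s i then ↑(E (s i) ⟨i, hiT i h⟩)
      else ↑((E (s i)).symm ⟨i, hiM i h⟩) with hfdef
    have keyT : ∀ (v : F) (j : Fin k) (hj : j ∈ T v), s j = v →
        f j = ↑(E v ⟨j, hj⟩) := by
      intro v j hj hsj
      subst hsj
      have h1 : a j * r = s j := (Finset.mem_filter.mp hj).2.2
      simp only [hfdef, dif_pos h1]
    have keyM : ∀ (v : F) (j : Fin k) (hj : j ∈ M v), s j = v →
        f j = ↑((E v).symm ⟨j, hj⟩) := by
      intro v j hj hsj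
      subst hsj
      have h1 : ¬ a j * r = s j := (Finset.mem_filter.mp hj).2.2
      simp only [hfdef, dif_neg h1]
    have hinv : Function.Involutive f := by
      intro i
      by_cases h : a i * r = s i
      · have h1 : f i = ↑(E (s i) ⟨i, hiT i h⟩) := keyT (s i) i (hiT i h) rfl
        have hM' : f i ∈ M (s i) := by rw [h1]; exact Subtype.coe_prop _
        have hsfi : s (f i) = s i := (Finset.mem_filter.mp hM').2.1
        rw [keyM (s i) (f i) hM' hsfi]
        have h2 : (⟨f i, hM'⟩ : (M (s i) : Type)) = E (s i) ⟨i, hiT i h⟩ :=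
          Subtype.ext h1
        rw [h2, Equiv.symm_apply_apply]
      · have h1 : f i = ↑((E (s i)).symm ⟨i, hiM i h⟩) := keyM (s i) i (hiM i h) rfl
        have hT' : f i ∈ T (s i) := by rw [h1]; exact Subtype.coe_prop _
        have hsfi : s (f i) = s i := (Finset.mem_filter.mp hT').2.1
        rw [keyT (s i) (f i) hT' hsfi]
        have h2 : (⟨f i, hT'⟩ : (T (s i) : Type)) = (E (s i)).symm ⟨i, hiM i h⟩ :=
          Subtype.ext h1
        rw [h2, Equiv.apply_symm_apply]
    have hflip : ∀ i, a (f i) * r = -(a i * r) := by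
      intro i
      by_cases h : a i * r = s i
      · have h1 : f i = ↑(E (s i) ⟨i, hiT i h⟩) := keyT (s i) i (hiT i h) rfl
        have hM' : f i ∈ M (s i) := by rw [h1]; exact Subtype.coe_prop _
        obtain ⟨-, hs1, hs2⟩ := Finset.mem_filter.mp hM'
        have : a (f i) * r = -(s (f i)) := hneg _ (hs1 ▸ hs2)
        rw [this, hs1, ← h]
      · have h1 : f i = ↑((E (s i)).symm ⟨i, hiM i h⟩) := keyM (s i) i (hiM i h) rfl
        have hT' : f i ∈ T (s i) := by rw [h1]; exact Subtype.coe_prop _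
        obtain ⟨-, hs1, hs2⟩ := Finset.mem_filter.mp hT'
        rw [hs2, hneg i h, neg_neg]
    have hfneg : ∀ i, a (f i) = - a i := by
      intro i
      have := hflip i
      rw [show -(a i * r) = (-(a i)) * r by ring] at this
      exact mul_right_cancel₀ hr this
    have hfne : ∀ i, f i ≠ i := by
      intro i hf
      by_cases h : a i * r = s i
      · have h1 : f i = ↑(E (s i) ⟨i, hiT i h⟩) := keyT (s i) i (hiT i h) rfl
        have hM' : f i ∈ M (s i) := by rw [h1]; exact Subtype.coe_prop _
        obtain ⟨-, -, hs2⟩ := Finset.mem_filter.mp hM'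
        rw [hf] at hs2
        exact hs2 h
      · have h1 : f i = ↑((E (s i)).symm ⟨i, hiM i h⟩) := keyM (s i) i (hiM i h) rfl
        have hT' : f i ∈ T (s i) := by rw [h1]; exact Subtype.coe_prop _
        obtain ⟨-, -, hs2⟩ := Finset.mem_filter.mp hT'
        rw [hf] at hs2
        exact h hs2
    exact hnopair ⟨hinv.toPerm, fun i => ⟨hfne i, hinv i, hfneg i⟩⟩
  · -- analytic part
    push_neg at hAll
    obtain ⟨v, hv, hpm⟩ := hAll
    have hv0 : v ≠ 0 := fun h => hR0 (h ▸ hv)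
    -- measurability and bound of the grouped factors
    have hgm : ∀ w ∈ R, Measurable (g w) := by
      intro w _
      exact ((hmeas w).pow_const _).mul
        ((Complex.continuous_conj.measurable.comp (hmeas w)).pow_const _)
    have hgb : ∀ w ∈ R, ∀ ω, ‖g w ω‖ ≤ 1 := by
      intro w hw ω
      have hw0 : w ≠ 0 := fun h => hR0 (h ▸ hw)
      simp [hgdef, norm_mul, norm_pow, hunit w hw0 ω]
    -- factor the expectation using independence
    have hgind : iIndepFun (m := fun _ : R => (inferInstance : MeasurableSpace ℂ))
        (fun w : R => g (w : F)) μ := by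
      have := hindep.comp
        (fun w : R => fun z : ℂ =>
          z ^ (T (w : F)).card * ((starRingEnd ℂ) z) ^ (M (w : F)).card)
        (fun w => (measurable_id.pow_const _).mul
          (Complex.continuous_conj.measurable.pow_const _))
      exact this
    have hfact : ∫ ω, ∏ w : R, g (w : F) ω ∂μ = ∏ w : R, ∫ ω, g (w : F) ω ∂μ :=
      aux_integral_indep_prod hgind (fun w => hgm _ w.2) (fun w ω => hgb _ w.2 ω)
        Finset.univ
    -- the unbalanced factor vanishes
    have hzero : ∫ ω, g v ω ∂μ = 0 := by
      have hφm : Measurable (fun z : ℂ => z ^ (T v).card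
          * ((starRingEnd ℂ) z) ^ (M v).card) :=
        (measurable_id.pow_const _).mul
          (Complex.continuous_conj.measurable.pow_const _)
      have h1 : ∫ ω, g v ω ∂μ = ∫ z, z ^ (T v).card
          * ((starRingEnd ℂ) z) ^ (M v).card ∂(Measure.map (ξ v) μ) :=
        (integral_map (hmeas v).aemeasurable hφm.aestronglyMeasurable).symm
      rw [h1, hunif v hv, integral_smul_measure, integral_map
        (Complex.measurable_ofReal.mul_const _).cexp.aemeasurable
        hφm.aestronglyMeasurable, aux_integral_circle _ _ hpm, smul_zero]
    calc ∫ ω, ∏ i, ξ (a i * r) ω ∂μ = ∫ ω, ∏ w ∈ R, g w ω ∂μ := by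
          simp only [hprod]
      _ = ∫ ω, ∏ w : R, g (w : F) ω ∂μ := by
          congr 1
          ext ω
          exact (Finset.prod_coe_sort R (fun w => g w ω)).symm
      _ = ∏ w : R, ∫ ω, g (w : F) ω ∂μ := hfact
      _ = 0 := Finset.prod_eq_zero (Finset.mem_univ (⟨v, hv⟩ : R)) hzero
end

section
/- Let k be even and a₁,…,a_k ∈ F_q \ {0} not admitting a partition into pairs summing to zero. Then there exists a function f : F_q → [0,1] with E f = 1/2 such that Σ_{r ∈ F_q \ {0}} f̂(a₁r)⋯f̂(a_kr) < 0, and consequently Λ_{L=0}(f) + Λ_{L=0}(1−f) < 2^{1−k}, so the equation a₁x₁+⋯+a_kx_k = 0 is neither common nor Sidorenko. -/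
/-!
Write `Λ(h)` for the average of `h(x₁)⋯h(x_k)` over the solutions of `∑ aᵢxᵢ = 0`. Expanding the
indicator of `∑ aᵢxᵢ = 0` in characters gives `Λ(h) = ĥ(1)^k + ∑_{r ≠ 1} ∏ᵢ ĥ(aᵢr)`. Passing from
`f` to `1 - f` negates every nontrivial coefficient, which `k` even absorbs, so for `E f = 1/2`
we get `Λ(f) + Λ(1 - f) = 2^{1-k} + 2 ∑_{r ≠ 1} ∏ᵢ f̂(aᵢr)`.

Take `f̂(r) = ξ(r)/(2q)` for `r ≠ 1`, with `|ξ| = 1` and `ξ(r⁻¹) = conj ξ(r)`: then `f` is real and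
`|f - 1/2| ≤ 1/2`. The paper picks `ξ` at random; here `ξ = ψ ∘ η` with `ψ` a faithful character
of `ZMod (2n)` and `η` odd. Averaged over all odd `η`, the term `∏ᵢ ξ(aᵢr) = ψ(∑ᵢ η(aᵢr))` vanishes
for each `r ≠ 1` precisely because the `aᵢr` cannot be paired off into mutually inverse
characters, whereas `η = 0` contributes `q - 1 > 0`; so some `η` makes the sum negative.
-/

open Finset
open scoped Classical

/-- The Fourier transform `f̂(r) = E_x f(x) conj(r(x))` on a finite vector space. -/
noncomputable def fourierHat {V : Type} [AddCommGroup V] [Fintype V]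
    (f : V → ℂ) (r : AddChar V ℂ) : ℂ :=
  (∑ x, f x * (starRingEnd ℂ) (r x)) / (Fintype.card V : ℂ)

/-- The character `x ↦ r(a • x)` obtained by rescaling `r` by `a ∈ F_q`. -/
noncomputable def scaleChar {F : Type} [Field F] {V : Type} [AddCommGroup V] [Module F V]
    (a : F) (r : AddChar V ℂ) : AddChar V ℂ :=
  r.compAddMonoidHom (DistribMulAction.toAddMonoidHom V a)

open ComplexConjugate

lemma AddChar.map_sum_eq_prod {A M ι : Type*} [AddCommMonoid A] [CommMonoid M]
    (ψ : AddChar A M) (s : Finset ι) (f : ι → A) : ψ (∑ i ∈ s, f i) = ∏ i ∈ s, ψ (f i) := by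
  simpa [← ofAdd_sum] using map_prod ψ.toMonoidHom (fun i => Multiplicative.ofAdd (f i)) s

lemma ZMod.natCast_ne_zero_of_pos_of_lt {m c : ℕ} (hc : 0 < c) (hcm : c < m) :
    (c : ZMod m) ≠ 0 := by
  rw [Ne, ZMod.natCast_eq_zero_iff]
  exact fun h => absurd (Nat.le_of_dvd hc h) (not_le.mpr hcm)

section ScaleChar
variable {F V : Type} [Field F] [AddCommGroup V] [Module F V]

@[simp] lemma scaleChar_apply (a : F) (r : AddChar V ℂ) (x : V) :
    scaleChar a r x = r (a • x) := rfl

@[simp] lemma scaleChar_one (a : F) : scaleChar a (1 : AddChar V ℂ) = 1 := by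
  ext; simp

lemma scaleChar_neg (a : F) (r : AddChar V ℂ) : scaleChar (-a) r = (scaleChar a r)⁻¹ := by
  ext; simp [neg_smul]

lemma scaleChar_ne_one {a : F} (ha : a ≠ 0) {r : AddChar V ℂ} (hr : r ≠ 1) :
    scaleChar a r ≠ 1 := by
  intro h
  apply hr
  ext x
  simpa [smul_smul, ha] using DFunLike.congr_fun h (a⁻¹ • x)

lemma scaleChar_left_injective {r : AddChar V ℂ} (hr : r ≠ 1) :
    Function.Injective fun a : F => scaleChar a r := by
  intro c d h
  by_contra hcd
  apply scaleChar_ne_one (sub_ne_zero.mpr hcd) hr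
  ext x
  have hx : r (c • x) = r (d • x) := DFunLike.congr_fun h x
  rw [scaleChar_apply, sub_smul, sub_eq_add_neg, AddChar.map_add_eq_mul, hx,
    ← AddChar.map_add_eq_mul, add_neg_cancel, AddChar.map_zero_eq_one, AddChar.one_apply]

lemma not_exists_inv_pairing_scaleChar {ι : Type} (a : ι → F)
    (hnopair : ¬∃ σ : Equiv.Perm ι, ∀ i, σ i ≠ i ∧ σ (σ i) = i ∧ a (σ i) = - a i)
    {r : AddChar V ℂ} (hr : r ≠ 1) :
    ¬∃ σ : Equiv.Perm ι, ∀ i, σ i ≠ i ∧ σ (σ i) = i ∧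
      scaleChar (a (σ i)) r = (scaleChar (a i) r)⁻¹ := by
  rintro ⟨σ, hσ⟩
  exact hnopair ⟨σ, fun i => ⟨(hσ i).1, (hσ i).2.1,
    scaleChar_left_injective hr ((hσ i).2.2.trans (scaleChar_neg _ _).symm)⟩⟩

end ScaleChar

section Fourier
variable {V : Type} [AddCommGroup V] [Fintype V]

lemma nonempty_filter_ne_one [Nontrivial V] :
    (univ.filter fun r : AddChar V ℂ => r ≠ 1).Nonempty := by
  obtain ⟨r, hr⟩ := Fintype.exists_ne_of_one_lt_card (α := AddChar V ℂ)
    (by rw [AddChar.card_eq]; exact Fintype.one_lt_card) 1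
  exact ⟨r, by simpa using hr⟩

lemma sum_addChar_mul_conj (χ ρ : AddChar V ℂ) :
    ∑ x, χ x * conj (ρ x) = if χ = ρ then (Fintype.card V : ℂ) else 0 := by
  simp_rw [← AddChar.inv_apply_eq_conj, ← AddChar.inv_apply', ← AddChar.mul_apply,
    AddChar.sum_eq_ite, ← AddChar.one_eq_zero, mul_inv_eq_one]

lemma fourierHat_one_right (h : V → ℂ) : fourierHat h 1 = (∑ x, h x) / Fintype.card V := by
  simp [fourierHat]

lemma fourierHat_ofReal_one_right (f : V → ℝ) :
    fourierHat (fun x => (f x : ℂ)) 1 = ((∑ x, f x) / Fintype.card V : ℝ) := by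
  rw [fourierHat_one_right]
  push_cast
  rfl

lemma fourierHat_sum_mul_addChar (c : AddChar V ℂ → ℂ) (ρ : AddChar V ℂ) :
    fourierHat (fun x => ∑ χ, c χ * χ x) ρ = c ρ := by
  simp_rw [fourierHat, Finset.sum_mul, mul_assoc]
  rw [Finset.sum_comm]
  simp_rw [← Finset.mul_sum, sum_addChar_mul_conj, mul_ite, mul_zero, Finset.sum_ite_eq',
    Finset.mem_univ, if_true]
  field_simp

lemma fourierHat_const_one (ρ : AddChar V ℂ) :
    fourierHat (fun _ => 1) ρ = if ρ = 1 then 1 else 0 := by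
  have h1 := sum_addChar_mul_conj 1 ρ
  simp only [AddChar.one_apply, one_mul] at h1
  simp only [fourierHat, one_mul, h1, eq_comm (a := (1 : AddChar V ℂ))]
  split_ifs <;> simp

lemma fourierHat_sub (g h : V → ℂ) (ρ : AddChar V ℂ) :
    fourierHat (fun x => g x - h x) ρ = fourierHat g ρ - fourierHat h ρ := by
  simp only [fourierHat, sub_mul, Finset.sum_sub_distrib, sub_div]

lemma fourierHat_one_sub (h : V → ℂ) (ρ : AddChar V ℂ) :
    fourierHat (fun x => 1 - h x) ρ = (if ρ = 1 then 1 else 0) - fourierHat h ρ := by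
  rw [fourierHat_sub (fun _ => 1), fourierHat_const_one]

lemma conj_sum_mul_addChar {c : AddChar V ℂ → ℂ} (hc : ∀ χ, c χ⁻¹ = conj (c χ)) (x : V) :
    conj (∑ χ, c χ * χ x) = ∑ χ, c χ * χ x := by
  simp_rw [map_sum, map_mul, ← hc, ← AddChar.inv_apply_eq_conj, ← AddChar.inv_apply']
  exact Fintype.sum_equiv (Equiv.inv _) _ _ fun _ => rfl

lemma norm_sum_erase_one_mul_addChar_le (c : AddChar V ℂ → ℂ) {B : ℝ}
    (hc : ∀ χ ≠ 1, ‖c χ‖ ≤ B) (hB : 0 ≤ B) (x : V) :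
    ‖∑ χ ∈ univ.erase 1, c χ * χ x‖ ≤ Fintype.card V * B := calc
  _ ≤ ∑ χ ∈ univ.erase 1, ‖c χ * χ x‖ := norm_sum_le _ _
  _ ≤ ∑ χ ∈ univ.erase (1 : AddChar V ℂ), B := by
    refine Finset.sum_le_sum fun χ hχ => ?_
    rw [norm_mul, AddChar.norm_apply, mul_one]
    exact hc χ (Finset.ne_of_mem_erase hχ)
  _ ≤ Fintype.card V * B := by
    rw [Finset.sum_const, nsmul_eq_mul, ← AddChar.card_eq]
    gcongr
    exact_mod_cast Finset.card_erase_le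

theorem exists_real_fourierHat_eq (ξ : AddChar V ℂ → ℂ) (hξ : ∀ ρ, ξ ρ⁻¹ = conj (ξ ρ))
    (hξ1 : ∀ ρ, ‖ξ ρ‖ = 1) :
    ∃ f : V → ℝ, (∀ x, f x ∈ Set.Icc (0 : ℝ) 1) ∧ fourierHat (fun x => (f x : ℂ)) 1 = 1 / 2 ∧
      ∀ ρ ≠ 1, fourierHat (fun x => (f x : ℂ)) ρ = ξ ρ / (2 * Fintype.card V) := by
  set c : AddChar V ℂ → ℂ := fun χ => if χ = 1 then 1 / 2 else ξ χ / (2 * Fintype.card V)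
  have hc : ∀ χ, c χ⁻¹ = conj (c χ) := by
    intro χ
    by_cases hχ : χ = 1
    · simp [c, hχ, map_ofNat]
    · simp [c, hχ, hξ, map_ofNat]
  have hreal (x : V) : ((∑ χ, c χ * χ x).re : ℂ) = ∑ χ, c χ * χ x :=
    Complex.conj_eq_iff_re.mp (conj_sum_mul_addChar hc x)
  refine ⟨fun x => (∑ χ, c χ * χ x).re, fun x => ?_, ?_, fun ρ hρ => ?_⟩
  · have hsplit : ∑ χ, c χ * χ x = 1 / 2 + ∑ χ ∈ univ.erase 1, c χ * χ x := by
      rw [← Finset.add_sum_erase _ _ (Finset.mem_univ 1)]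
      simp [c]
    have hbound : ‖∑ χ ∈ univ.erase 1, c χ * χ x‖ ≤ 1 / 2 := by
      refine (norm_sum_erase_one_mul_addChar_le c (B := 1 / (2 * Fintype.card V))
        (fun χ hχ => ?_) (by positivity) x).trans_eq (by field_simp)
      simp [c, hχ, hξ1]
    have hre := (Complex.abs_re_le_norm (∑ χ ∈ univ.erase 1, c χ * χ x)).trans hbound
    have hhalf : (1 / 2 : ℂ).re = 1 / 2 := by norm_num
    show (∑ χ, c χ * χ x).re ∈ _
    rw [hsplit, Complex.add_re, hhalf, Set.mem_Icc]
    constructor <;> linarith [abs_le.mp hre]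
  · simp_rw [hreal, fourierHat_sum_mul_addChar]
    simp [c]
  · simp_rw [hreal, fourierHat_sum_mul_addChar]
    simp [c, hρ]

end Fourier

section Counting
variable {F : Type} [Field F] [Fintype F] {k : ℕ}

noncomputable def nontrivialFourierSum (a : Fin k → F) (h : F → ℂ) : ℂ :=
  ∑ r ∈ univ.filter (fun r : AddChar F ℂ => r ≠ 1), ∏ i, fourierHat h (scaleChar (a i) r)

lemma nontrivialFourierSum_const_one (hk : k ≠ 0) (a : Fin k → F) (ha : ∀ i, a i ≠ 0) :
    nontrivialFourierSum a (fun _ => 1) = 0 := by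
  refine Finset.sum_eq_zero fun r hr => Finset.prod_eq_zero (i := ⟨0, Nat.pos_of_ne_zero hk⟩)
    (mem_univ _) ?_
  rw [fourierHat_const_one, if_neg (scaleChar_ne_one (ha _) (Finset.mem_filter.mp hr).2)]

lemma nontrivialFourierSum_one_sub (hk : Even k) (a : Fin k → F) (ha : ∀ i, a i ≠ 0)
    (h : F → ℂ) : nontrivialFourierSum a (fun x => 1 - h x) = nontrivialFourierSum a h := by
  refine Finset.sum_congr rfl fun r hr => ?_
  simp_rw [fourierHat_one_sub, if_neg (scaleChar_ne_one (ha _) (Finset.mem_filter.mp hr).2),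
    zero_sub, Finset.prod_neg, Finset.card_univ, Fintype.card_fin, hk.neg_one_pow, one_mul]

lemma nontrivialFourierSum_eq_of_fourierHat_eq (a : Fin k → F) (ha : ∀ i, a i ≠ 0)
    {h : F → ℂ} {ξ : AddChar F ℂ → ℂ} {c : ℝ} (hh : ∀ ρ ≠ 1, fourierHat h ρ = ξ ρ / c) :
    nontrivialFourierSum a h
      = (∑ r ∈ univ.filter (fun r : AddChar F ℂ => r ≠ 1), ∏ i, ξ (scaleChar (a i) r))
          / (c ^ k : ℝ) := by
  rw [nontrivialFourierSum, Finset.sum_div]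
  refine Finset.sum_congr rfl fun r hr => ?_
  rw [Finset.prod_congr rfl fun i _ => hh _ (scaleChar_ne_one (ha i) (mem_filter.mp hr).2),
    Finset.prod_div_distrib, Finset.prod_const, Finset.card_univ, Fintype.card_fin]
  push_cast
  rfl

variable [DecidableEq F]

/-- `Λ_{L=0}(h)` in the paper. -/
noncomputable def solutionAverage {𝕜 : Type} [Field 𝕜] (a : Fin k → F) (h : F → 𝕜) : 𝕜 :=
  (∑ x ∈ univ.filter (fun x : Fin k → F => ∑ i, a i * x i = 0), ∏ i, h (x i)) /
    (univ.filter (fun x : Fin k → F => ∑ i, a i * x i = 0)).card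

lemma card_mul_sum_solutions (a : Fin k → F) (h : Fin k → F → ℂ) :
    (Fintype.card F : ℂ) * ∑ x ∈ univ.filter (fun x : Fin k → F => ∑ i, a i * x i = 0),
        ∏ i, h i (x i)
      = (Fintype.card F : ℂ) ^ k *
          ∑ r : AddChar F ℂ, ∏ i, fourierHat (h i) (scaleChar (a i) r) := by
  have hq : (Fintype.card F : ℂ) ≠ 0 := by simp
  have hfactor (r : AddChar F ℂ) :
      (Fintype.card F : ℂ) ^ k * ∏ i, fourierHat (h i) (scaleChar (a i) r)
        = ∑ x : Fin k → F, (∏ i, h i (x i)) * conj (r (∑ i, a i * x i)) := by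
    simp_rw [fourierHat, Finset.prod_div_distrib, Finset.prod_const, Finset.card_univ,
      Fintype.card_fin]
    rw [mul_div_cancel₀ _ (pow_ne_zero k hq)]
    simp_rw [Fintype.prod_sum, AddChar.map_sum_eq_prod, map_prod, Finset.prod_mul_distrib,
      scaleChar_apply, smul_eq_mul]
  simp_rw [Finset.mul_sum, hfactor]
  rw [Finset.sum_comm]
  simp_rw [← Finset.mul_sum, ← map_sum, AddChar.sum_apply_eq_ite, apply_ite conj, map_natCast,
    map_zero, mul_ite, mul_zero, Finset.sum_ite, Finset.sum_const_zero, add_zero]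
  rw [Finset.mul_sum]
  exact Finset.sum_congr rfl fun _ _ => mul_comm _ _

lemma card_mul_sum_solutions_eq (a : Fin k → F) (h : F → ℂ) :
    (Fintype.card F : ℂ) * ∑ x ∈ univ.filter (fun x : Fin k → F => ∑ i, a i * x i = 0),
        ∏ i, h (x i)
      = (Fintype.card F : ℂ) ^ k * (fourierHat h 1 ^ k + nontrivialFourierSum a h) := by
  rw [card_mul_sum_solutions a (fun _ => h), ← Finset.add_sum_erase _ _ (mem_univ 1),
    nontrivialFourierSum, Finset.filter_ne']
  simp

lemma solutionAverage_eq (hk : k ≠ 0) (a : Fin k → F) (ha : ∀ i, a i ≠ 0) (h : F → ℂ) :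
    solutionAverage a h = fourierHat h 1 ^ k + nontrivialFourierSum a h := by
  have hcard := card_mul_sum_solutions_eq a (fun _ => 1)
  simp only [Finset.prod_const_one, Finset.sum_const, nsmul_eq_mul, mul_one,
    nontrivialFourierSum_const_one hk a ha, fourierHat_const_one, if_true, one_pow,
    add_zero] at hcard
  have hq : (Fintype.card F : ℂ) ^ k ≠ 0 := by simp
  rw [solutionAverage, ← mul_div_mul_left _ _ (show (Fintype.card F : ℂ) ≠ 0 by simp),
    card_mul_sum_solutions_eq, hcard, mul_div_cancel_left₀ _ hq]

theorem solutionAverage_add_solutionAverage_one_sub (hk : Even k) (hk0 : k ≠ 0)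
    (a : Fin k → F) (ha : ∀ i, a i ≠ 0) (h : F → ℂ) :
    solutionAverage a h + solutionAverage a (fun x => 1 - h x)
      = fourierHat h 1 ^ k + (1 - fourierHat h 1) ^ k + 2 * nontrivialFourierSum a h := by
  rw [solutionAverage_eq hk0 a ha, solutionAverage_eq hk0 a ha, fourierHat_one_sub,
    nontrivialFourierSum_one_sub hk a ha, if_pos rfl]
  ring

theorem solutionAverage_add_solutionAverage_one_sub_of_mean_eq_half (hk : Even k) (hk0 : k ≠ 0)
    (a : Fin k → F) (ha : ∀ i, a i ≠ 0) (f : F → ℝ)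
    (hf : fourierHat (fun x => (f x : ℂ)) 1 = 1 / 2) :
    solutionAverage a f + solutionAverage a (fun x => 1 - f x)
        = 2 ^ ((1 : ℤ) - k) + 2 * (nontrivialFourierSum a fun x => (f x : ℂ)).re ∧
      (nontrivialFourierSum a fun x => (f x : ℂ)).im = 0 := by
  have hΛ := solutionAverage_add_solutionAverage_one_sub hk hk0 a ha fun x => (f x : ℂ)
  have hcast : ((solutionAverage a f + solutionAverage a (fun x => 1 - f x) : ℝ) : ℂ)
      = solutionAverage a (fun x => (f x : ℂ)) + solutionAverage a (fun x => 1 - (f x : ℂ)) := by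
    simp [solutionAverage]
  have hhalf : (2 : ℝ) ^ ((1 : ℤ) - k) = 2 * (1 / 2) ^ k := by
    rw [zpow_sub₀ two_ne_zero, zpow_one, zpow_natCast, one_div_pow]
    ring
  rw [hf, show ((1 : ℂ) / 2) ^ k + (1 - 1 / 2) ^ k = ((2 ^ ((1 : ℤ) - k) : ℝ) : ℂ) by
      rw [hhalf]; push_cast; ring, ← hcast, Complex.ext_iff] at hΛ
  simp only [Complex.ofReal_re, Complex.ofReal_im, Complex.add_re, Complex.add_im,
    Complex.re_ofNat, Complex.im_ofNat, Complex.mul_re, Complex.mul_im, zero_mul, sub_zero,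
    add_zero, zero_add] at hΛ
  exact ⟨hΛ.1, by linarith [hΛ.2]⟩

end Counting

section Pairing
variable {ι G : Type*} [InvolutiveInv G]

def oddFunctions (G M : Type*) [InvolutiveInv G] [AddCommGroup M] : AddSubgroup (G → M) where
  carrier := {η | ∀ g, η g⁻¹ = -η g}
  add_mem' h₁ h₂ g := by simp [h₁ g, h₂ g, add_comm]
  zero_mem' g := by simp
  neg_mem' h g := by simp [h g]

/-- Were there no partner, an odd `η` supported on `{b i, (b i)⁻¹}` would have nonzero sum:
`η = ±1` there, or `η (b i) = n` (of order `2`) when `b i` is its own inverse. -/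
lemma exists_inv_partner {n : ℕ} (b : ι → G) {s : Finset ι} (hs : s.card < n)
    (hb : ∀ η ∈ oddFunctions G (ZMod (2 * n)), ∑ i ∈ s, η (b i) = 0) {i : ι} (hi : i ∈ s) :
    ∃ j ∈ s, j ≠ i ∧ b j = (b i)⁻¹ := by
  by_contra! hno
  set v := b i
  have hpos : 0 < n := by have := Finset.card_pos.mpr ⟨i, hi⟩; omega
  by_cases hv : v⁻¹ = v
  · have hfib : s.filter (fun j => b j = v) = {i} := by
      ext j
      simp only [Finset.mem_filter, Finset.mem_singleton]
      exact ⟨fun ⟨hj, hbj⟩ => by_contra fun hji => hno j hj hji (hbj.trans hv.symm),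
        fun hji => hji ▸ ⟨hi, rfl⟩⟩
    refine ZMod.natCast_ne_zero_of_pos_of_lt (m := 2 * n) hpos (by omega : n < 2 * n) ?_
    convert hb (fun g => if g = v then (n : ZMod (2 * n)) else 0) fun g => ?_ using 1
    · rw [Finset.sum_ite, Finset.sum_const_zero, add_zero, Finset.sum_const, hfib,
        Finset.card_singleton, one_smul]
    · have hn : (n : ZMod (2 * n)) = -n := by
        rw [eq_neg_iff_add_eq_zero, ← Nat.cast_add, ← two_mul, ZMod.natCast_self]
      dsimp only
      by_cases hg : g = v
      · rw [hg, if_pos hv, if_pos rfl, ← hn]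
      · rw [if_neg hg, if_neg fun h => hg (by rw [← inv_inv g, h, hv]), neg_zero]
  · have hfib : s.filter (fun j => b j = v⁻¹) = ∅ := by
      refine Finset.filter_eq_empty_iff.mpr fun j hj hbj => ?_
      exact hno j hj (fun hji => hv (hji ▸ hbj).symm) hbj
    have hcard : 0 < (s.filter fun j => b j = v).card :=
      Finset.card_pos.mpr ⟨i, Finset.mem_filter.mpr ⟨hi, rfl⟩⟩
    refine ZMod.natCast_ne_zero_of_pos_of_lt (m := 2 * n) hcard
      ((Finset.card_filter_le s _).trans_lt (by omega)) ?_
    convert hb (fun g => (if g = v then 1 else 0) - if g = v⁻¹ then 1 else 0) fun g => ?_ using 1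
    · rw [Finset.sum_sub_distrib, Finset.sum_boole, Finset.sum_boole, hfib]
      simp
    · simp only [inv_eq_iff_eq_inv, inv_inv]
      abel

lemma sum_erase_erase_of_mem_oddFunctions {M : Type*} [AddCommGroup M] {η : G → M}
    (hη : η ∈ oddFunctions G M) (b : ι → G) {s : Finset ι} {i j : ι} (hi : i ∈ s) (hj : j ∈ s)
    (hji : j ≠ i) (hbj : b j = (b i)⁻¹) :
    ∑ x ∈ (s.erase i).erase j, η (b x) = ∑ x ∈ s, η (b x) := by
  rw [← Finset.add_sum_erase s _ hi, ← Finset.add_sum_erase _ _ (Finset.mem_erase.mpr ⟨hji, hj⟩),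
    hbj, hη, add_neg_cancel_left]

theorem exists_involutive_pairing {n : ℕ} (b : ι → G) (s : Finset ι) (hs : s.card < n)
    (hb : ∀ η ∈ oddFunctions G (ZMod (2 * n)), ∑ i ∈ s, η (b i) = 0) :
    ∃ σ : Equiv.Perm ι, Function.Involutive σ ∧ (∀ i ∈ s, σ i ≠ i ∧ b (σ i) = (b i)⁻¹) ∧
      ∀ i ∉ s, σ i = i := by
  induction s using Finset.strongInduction with
  | H s ih =>
  rcases s.eq_empty_or_nonempty with rfl | ⟨i, hi⟩
  · exact ⟨1, fun _ => rfl, by simp, fun _ _ => rfl⟩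
  obtain ⟨j, hj, hji, hbj⟩ := exists_inv_partner b hs hb hi
  set t := (s.erase i).erase j
  have hts : t ⊂ s := (Finset.erase_ssubset (Finset.mem_erase.mpr ⟨hji, hj⟩)).trans
    (Finset.erase_ssubset hi)
  obtain ⟨τ, hτ, hτt, hτout⟩ := ih t hts ((Finset.card_lt_card hts).trans hs) fun η hη => by
    rw [sum_erase_erase_of_mem_oddFunctions hη b hi hj hji hbj, hb η hη]
  have hτi : τ i = i := hτout i (by simp [t])
  have hτj : τ j = j := hτout j (by simp [t])
  have hσ (x : ι) (hxi : x ≠ i) (hxj : x ≠ j) : (Equiv.swap i j * τ) x = τ x :=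
    Equiv.swap_apply_of_ne_of_ne (fun h => hxi (τ.injective (h.trans hτi.symm)))
      (fun h => hxj (τ.injective (h.trans hτj.symm)))
  have hσi : (Equiv.swap i j * τ) i = j := by simp [hτi]
  have hσj : (Equiv.swap i j * τ) j = i := by simp [hτj]
  have hxt {x : ι} (hxi : x ≠ i) (hxj : x ≠ j) (hx : x ∈ s) : x ∈ t := by simp [t, *]
  refine ⟨Equiv.swap i j * τ, fun x => ?_, fun x hx => ?_, fun x hx => ?_⟩
  · by_cases hxi : x = i
    · rw [hxi, hσi, hσj]
    by_cases hxj : x = j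
    · rw [hxj, hσj, hσi]
    rw [hσ x hxi hxj, hσ (τ x) (fun h => hxi (by rw [← hτ x, h, hτi]))
      (fun h => hxj (by rw [← hτ x, h, hτj])), hτ x]
  · by_cases hxi : x = i
    · rw [hxi, hσi]; exact ⟨hji, hbj⟩
    by_cases hxj : x = j
    · rw [hxj, hσj, hbj, inv_inv]; exact ⟨Ne.symm hji, rfl⟩
    rw [hσ x hxi hxj]
    exact hτt x (hxt hxi hxj hx)
  · have hxi : x ≠ i := fun h => hx (h ▸ hi)
    have hxj : x ≠ j := fun h => hx (h ▸ hj)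
    rw [hσ x hxi hxj, hτout x fun h => hx (hts.subset h)]

end Pairing

theorem exists_re_sum_addChar_neg {S κ : Type*} [AddCommGroup S] [Fintype S] {D : Finset κ}
    (hD : D.Nonempty) (φ : κ → AddChar S ℂ) (hφ : ∀ d ∈ D, φ d ≠ 0) :
    ∃ s, (∑ d ∈ D, φ d s).re < 0 := by
  by_contra! hnonneg
  have hzero : ∑ s, (∑ d ∈ D, φ d s).re = 0 := by
    rw [← Complex.re_sum, Finset.sum_comm, Finset.sum_eq_zero fun d hd =>
      AddChar.sum_eq_zero_iff_ne_zero.mpr (hφ d hd), Complex.zero_re]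
  have hpos : 0 < (∑ d ∈ D, φ d 0).re := by simp [hD.card_pos]
  linarith [Finset.single_le_sum (fun s _ => hnonneg s) (mem_univ (0 : S))]

theorem exists_conj_symm_unit_re_sum_prod_neg {ι κ G : Type*} [Fintype ι] [InvolutiveInv G]
    [Fintype G] {D : Finset κ} (hD : D.Nonempty) (b : ι → κ → G)
    (hb : ∀ d ∈ D, ¬∃ σ : Equiv.Perm ι, ∀ i, σ i ≠ i ∧ σ (σ i) = i ∧ b (σ i) d = (b i d)⁻¹) :
    ∃ ξ : G → ℂ, (∀ g, ξ g⁻¹ = conj (ξ g)) ∧ (∀ g, ‖ξ g‖ = 1) ∧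
      (∑ d ∈ D, ∏ i, ξ (b i d)).re < 0 := by
  set n := Fintype.card ι + 1
  have : NeZero (2 * n) := ⟨by omega⟩
  set ψ : AddChar (ZMod (2 * n)) ℂ := ZMod.stdAddChar
  set Φ : κ → AddChar (oddFunctions G (ZMod (2 * n))) ℂ := fun d => ψ.compAddMonoidHom
    ((∑ i, Pi.evalAddMonoidHom (fun _ => ZMod (2 * n)) (b i d)).comp (AddSubgroup.subtype _))
  have hΦ (d : κ) (η : oddFunctions G (ZMod (2 * n))) :
      Φ d η = ∏ i, ψ ((η : G → _) (b i d)) := by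
    simp [Φ, AddChar.map_sum_eq_prod]
  have hΦ_ne (d : κ) (hd : d ∈ D) : Φ d ≠ 0 := by
    intro hΦ0
    obtain ⟨σ, hσ, hpair, -⟩ := exists_involutive_pairing (n := n) (fun i => b i d) univ
      (by simp [n]) fun η hη => ZMod.injective_stdAddChar (by
        simpa [hΦ, AddChar.map_sum_eq_prod] using DFunLike.congr_fun hΦ0 ⟨η, hη⟩)
    exact hb d hd ⟨σ, fun i => ⟨(hpair i (mem_univ i)).1, hσ i, (hpair i (mem_univ i)).2⟩⟩
  obtain ⟨η, hη⟩ := exists_re_sum_addChar_neg hD Φ hΦ_ne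
  refine ⟨fun g => ψ ((η : G → _) g), fun g => ?_, fun g => AddChar.norm_apply _ _, ?_⟩
  · show ψ ((η : G → _) g⁻¹) = conj (ψ ((η : G → _) g))
    rw [η.2 g, AddChar.map_neg_eq_conj]
  · simpa [hΦ] using hη

/-- If `k` is even and the nonzero coefficients `a₁,…,a_k` admit no partition into pairs
summing to zero, then there is `f : F_q → [0,1]` of mean `1/2` whose nontrivial Fourier
contribution `Σ_{r ≠ 1} f̂(a₁r)⋯f̂(a_kr)` is (real and) negative, whence
`Λ_{L=0}(f) + Λ_{L=0}(1-f) < 2^{1-k}`: the equation is neither common nor Sidorenko. -/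
theorem stmt_10 {F : Type} [Field F] [Fintype F] [DecidableEq F]
    (k : ℕ) (hk : Even k) (a : Fin k → F) (ha : ∀ i, a i ≠ 0)
    (hnopair : ¬∃ σ : Equiv.Perm (Fin k), ∀ i, σ i ≠ i ∧ σ (σ i) = i ∧ a (σ i) = - a i) :
    ∃ f : F → ℝ, (∀ x, f x ∈ Set.Icc (0 : ℝ) 1)
      ∧ (∑ x, f x) / (Fintype.card F : ℝ) = 1 / 2
      ∧ (∃ s : ℝ, (∑ r ∈ Finset.univ.filter (fun r : AddChar F ℂ => r ≠ 1),
            ∏ i, fourierHat (fun x => (f x : ℂ)) (scaleChar (a i) r)) = (s : ℂ) ∧ s < 0)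
      ∧ (∑ x ∈ Finset.univ.filter
            (fun x : Fin k → F => ∑ i, a i * x i = 0), ∏ i, f (x i)) /
          ((Finset.univ.filter (fun x : Fin k → F => ∑ i, a i * x i = 0)).card : ℝ)
        + (∑ x ∈ Finset.univ.filter
            (fun x : Fin k → F => ∑ i, a i * x i = 0), ∏ i, (1 - f (x i))) /
          ((Finset.univ.filter (fun x : Fin k → F => ∑ i, a i * x i = 0)).card : ℝ)
        < (2 : ℝ) ^ ((1 : ℤ) - k) := by
  have hk0 : k ≠ 0 := by
    rintro rfl
    exact hnopair ⟨1, fun i => i.elim0⟩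
  obtain ⟨ξ, hξ, hξ1, hneg⟩ :=
    exists_conj_symm_unit_re_sum_prod_neg (nonempty_filter_ne_one (V := F))
      (fun i r => scaleChar (a i) r) fun r hr =>
        not_exists_inv_pairing_scaleChar a hnopair (mem_filter.mp hr).2
  obtain ⟨f, hf01, hmean, hhat⟩ := exists_real_fourierHat_eq ξ hξ hξ1
  obtain ⟨hΛ, him⟩ :=
    solutionAverage_add_solutionAverage_one_sub_of_mean_eq_half hk hk0 a ha f hmean
  have hS_re : (nontrivialFourierSum a fun x => (f x : ℂ)).re < 0 := by
    rw [nontrivialFourierSum_eq_of_fourierHat_eq a ha (c := 2 * Fintype.card F) (by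
      exact_mod_cast hhat), Complex.div_ofReal_re]
    exact div_neg_of_neg_of_pos hneg (by positivity)
  refine ⟨f, hf01, ?_, ⟨_, Complex.ext rfl him, hS_re⟩, ?_⟩
  · apply Complex.ofReal_injective
    rw [← fourierHat_ofReal_one_right, hmean]
    norm_num
  · show solutionAverage a f + solutionAverage a (fun x => 1 - f x) < _
    linarith
end

section
/- Let k be odd, ℓ ≥ 1, and a₁,…,a_k ∈ F_q \ {0}. Then the equation L'(x₁,…,x_{k+ℓ}) = a₁x₁+⋯+a_kx_k + 0·x_{k+1}+⋯+0·x_{k+ℓ} = 0 is not common: there exists f : F_q → [0,1] with Λ_{L'=0}(f) + Λ_{L'=0}(1−f) < 2^{1−k−ℓ}, where Λ_{L'=0}(g) = (E g)^ℓ · Λ_{L=0}(g). -/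
/-!
Take `f` with `f̂(0) = 1/2 + c` and `f̂(r) = -1/(2q)` for all `r ≠ 0`, i.e.
`f = 1/2 + c + 1/(2q) - (1/2)·1_{0}`. For a function with such a flat spectrum the density of
solutions of `a₁x₁ + ⋯ + a_kx_k = 0` is `f̂(0)^k + (q-1) f̂(r)^k`, so for odd `k`, with `ℓ` free
variables, `Λ(f) + Λ(1-f) = (1/2+c)^(k+ℓ) + (1/2-c)^(k+ℓ) - δ((1/2+c)^ℓ - (1/2-c)^ℓ)` where
`δ = (q-1)(2q)^(-k) > 0`. This equals `2^(1-k-ℓ)` at `c = 0` and has derivative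
`-2ℓδ 2^(1-ℓ) < 0` there, so it drops below `2^(1-k-ℓ)` for small `c > 0`.
-/

open Finset Filter Topology

section

variable {F : Type*} [Field F] [Fintype F] [DecidableEq F]

def solutionSet {k : ℕ} (a : Fin k → F) : Finset (Fin k → F) :=
  univ.filter fun x => ∑ i, a i * x i = 0

/-- `Λ_{L=0}(g)` for `L = a₁x₁ + ⋯ + a_kx_k`. -/
noncomputable def solutionDensity {k : ℕ} (a : Fin k → F) (g : F → ℝ) : ℝ :=
  (∑ x ∈ solutionSet a, ∏ i, g (x i)) / #(solutionSet a)

noncomputable def average (g : F → ℝ) : ℝ := (∑ x, g x) / Fintype.card F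

/-- The function with Fourier coefficient `m` at `0` and `b` at every nonzero frequency. -/
noncomputable def flatSpectrum (m b : ℝ) : F → ℝ :=
  fun x => m - b + if x = 0 then Fintype.card F * b else 0

theorem sum_solutionSet_succ {M : Type*} [AddCommMonoid M] {k : ℕ} (a : Fin (k + 1) → F)
    (ha : a 0 ≠ 0) (h : (Fin (k + 1) → F) → M) :
    ∑ x ∈ solutionSet a, h x =
      ∑ y : Fin k → F, h (Fin.cons (-(a 0)⁻¹ * ∑ i, a i.succ * y i) y) := by
  set t : (Fin k → F) → F := fun y => -(a 0)⁻¹ * ∑ i, a i.succ * y i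
  have hsolve (x : Fin (k + 1) → F) : ∑ i, a i * x i = 0 ↔ x 0 = t (Fin.tail x) := by
    simp only [t, Fin.sum_univ_succ, Fin.tail]
    constructor
    · intro h
      field_simp
      linear_combination h
    · intro h
      rw [h]
      field_simp
      ring
  have hcons (x) (hx : x ∈ solutionSet a) : Fin.cons (t (Fin.tail x)) (Fin.tail x) = x := by
    rw [← (hsolve x).1 (mem_filter.1 hx).2, Fin.cons_self_tail]
  refine sum_nbij' Fin.tail (fun y => Fin.cons (t y) y) (by simp) (fun y _ => ?_) hcons
    (fun y _ => Fin.tail_cons _ _) (fun x hx => by rw [hcons x hx])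
  simp [solutionSet, hsolve]

theorem sum_flatSpectrum (m b : ℝ) :
    ∑ x, flatSpectrum (F := F) m b x = Fintype.card F * m := by
  simp [flatSpectrum, sum_add_distrib]

theorem card_mul_sum_solutionSet_prod_flatSpectrum {k : ℕ} (a : Fin k → F) (ha : ∀ i, a i ≠ 0)
    (m b : ℝ) :
    Fintype.card F * ∑ x ∈ solutionSet a, ∏ i, flatSpectrum m b (x i) =
      (Fintype.card F * m) ^ k + (Fintype.card F - 1) * (Fintype.card F * b) ^ k := by
  induction k with
  | zero => simp [solutionSet]
  | succ k ih =>
    have hzero (y : Fin k → F) :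
        -(a 0)⁻¹ * ∑ i, a i.succ * y i = 0 ↔ ∑ i, a i.succ * y i = 0 := by simp [ha 0]
    -- `x 0` is determined by the other coordinates, and vanishes iff they solve the shorter
    -- equation.
    rw [sum_solutionSet_succ a (ha 0)]
    simp only [Fin.prod_univ_succ, Fin.cons_zero, Fin.cons_succ]
    have hsplit : ∑ y : Fin k → F, flatSpectrum m b (-(a 0)⁻¹ * ∑ i, a i.succ * y i) *
          ∏ i, flatSpectrum m b (y i) =
        (m - b) * ∑ y : Fin k → F, ∏ i, flatSpectrum m b (y i) +
          Fintype.card F * b *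
            ∑ y ∈ solutionSet (fun i => a i.succ), ∏ i, flatSpectrum m b (y i) := by
      simp only [flatSpectrum, hzero]
      simp only [solutionSet, sum_filter, mul_sum, ← sum_add_distrib]
      refine sum_congr rfl fun y _ => ?_
      split_ifs <;> ring
    rw [hsplit, ← Fintype.sum_pow, sum_flatSpectrum]
    linear_combination Fintype.card F * b * ih (fun i => a i.succ) (fun i => ha i.succ)

theorem average_flatSpectrum (m b : ℝ) : average (flatSpectrum (F := F) m b) = m := by
  rw [average, sum_flatSpectrum, mul_div_cancel_left₀ _ (Nat.cast_ne_zero.2 Fintype.card_ne_zero)]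

theorem card_mul_card_solutionSet {k : ℕ} (a : Fin k → F) (ha : ∀ i, a i ≠ 0) (hk : k ≠ 0) :
    Fintype.card F * (#(solutionSet a) : ℝ) = Fintype.card F ^ k := by
  have h := card_mul_sum_solutionSet_prod_flatSpectrum a ha 1 0
  simpa [flatSpectrum, hk] using h

theorem solutionDensity_flatSpectrum {k : ℕ} (a : Fin k → F) (ha : ∀ i, a i ≠ 0) (hk : k ≠ 0)
    (m b : ℝ) :
    solutionDensity a (flatSpectrum m b) = m ^ k + (Fintype.card F - 1) * b ^ k := by
  have hq : (Fintype.card F : ℝ) ≠ 0 := Nat.cast_ne_zero.2 Fintype.card_ne_zero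
  rw [solutionDensity, ← mul_div_mul_left _ _ hq, card_mul_sum_solutionSet_prod_flatSpectrum a ha,
    card_mul_card_solutionSet a ha hk]
  field_simp
  ring

theorem one_sub_flatSpectrum (m b : ℝ) :
    1 - flatSpectrum (F := F) m b = flatSpectrum (1 - m) (-b) := by
  funext x
  simp only [flatSpectrum, Pi.sub_apply, Pi.one_apply]
  split_ifs <;> ring

end

theorem eventually_pow_add_pow_sub_mul_lt {t δ : ℝ} (ht : 0 < t) (hδ : 0 < δ) (n : ℕ) {ℓ : ℕ}
    (hℓ : ℓ ≠ 0) :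
    ∀ᶠ c in 𝓝[>] 0, (t + c) ^ n + (t - c) ^ n - δ * ((t + c) ^ ℓ - (t - c) ^ ℓ) < 2 * t ^ n := by
  set φ : ℝ → ℝ := fun c => (t + c) ^ n + (t - c) ^ n - δ * ((t + c) ^ ℓ - (t - c) ^ ℓ)
  have hplus (m : ℕ) : HasDerivAt (fun c => (t + c) ^ m) (m * t ^ (m - 1)) 0 := by
    simpa using ((hasDerivAt_id (0 : ℝ)).const_add t).fun_pow m
  have hminus (m : ℕ) : HasDerivAt (fun c => (t - c) ^ m) (-(m * t ^ (m - 1))) 0 := by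
    simpa using ((hasDerivAt_id (0 : ℝ)).const_sub t).fun_pow m
  have hφ : HasDerivAt φ (-(2 * δ * ℓ * t ^ (ℓ - 1))) 0 := by
    refine (((hplus n).fun_add (hminus n)).fun_sub
      (((hplus ℓ).fun_sub (hminus ℓ)).const_mul δ)).congr_deriv ?_
    ring
  have hneg : -(2 * δ * ℓ * t ^ (ℓ - 1)) < 0 := neg_neg_of_pos (by positivity)
  filter_upwards [hφ.hasDerivWithinAt.limsup_slope_le' (s := Set.Ioi 0) (lt_irrefl (0 : ℝ)) hneg,
    self_mem_nhdsWithin] with c hslope (hc : 0 < c)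
  rw [slope_def_field, sub_zero, div_lt_iff₀ hc, zero_mul, sub_neg] at hslope
  simpa [φ, two_mul] using hslope

/-- Adding `ℓ ≥ 1` free variables to an odd-length equation with nonzero coefficients makes it
not common: there is `f : F_q → [0,1]` with
`Λ_{L'=0}(f) + Λ_{L'=0}(1-f) < 2^{1-k-ℓ}`, where `Λ_{L'=0}(g) = (E g)^ℓ · Λ_{L=0}(g)`. -/
theorem stmt_12 {F : Type} [Field F] [Fintype F] [DecidableEq F]
    (k ℓ : ℕ) (hk : Odd k) (hℓ : 1 ≤ ℓ) (a : Fin k → F) (ha : ∀ i, a i ≠ 0) :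
    ∃ f : F → ℝ, (∀ x, f x ∈ Set.Icc (0 : ℝ) 1)
      ∧ ((∑ x, f x) / (Fintype.card F : ℝ)) ^ ℓ *
          ((∑ x ∈ Finset.univ.filter
              (fun x : Fin k → F => ∑ i, a i * x i = 0), ∏ i, f (x i)) /
            ((Finset.univ.filter (fun x : Fin k → F => ∑ i, a i * x i = 0)).card : ℝ))
        + ((∑ x, (1 - f x)) / (Fintype.card F : ℝ)) ^ ℓ *
          ((∑ x ∈ Finset.univ.filter
              (fun x : Fin k → F => ∑ i, a i * x i = 0), ∏ i, (1 - f (x i))) /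
            ((Finset.univ.filter (fun x : Fin k → F => ∑ i, a i * x i = 0)).card : ℝ))
        < (2 : ℝ) ^ ((1 : ℤ) - k - ℓ) := by
  have hq : (2 : ℝ) ≤ Fintype.card F := by
    exact_mod_cast (Fintype.one_lt_card : 2 ≤ Fintype.card F)
  set q : ℝ := (Fintype.card F : ℝ) with hq_def
  set δ : ℝ := (q - 1) * (1 / (2 * q)) ^ k
  have hδ : 0 < δ := mul_pos (by linarith) (by positivity)
  obtain ⟨c, hlt, hc⟩ := ((eventually_pow_add_pow_sub_mul_lt (t := 1 / 2) (by norm_num) hδ (k + ℓ)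
    (by omega : ℓ ≠ 0)).and (Ioo_mem_nhdsGT (by norm_num : (0 : ℝ) < 1 / 4))).exists
  have hq4 : 1 / (2 * q) ≤ 1 / 4 := by gcongr; linarith
  have hq0 : 0 < 1 / (2 * q) := by positivity
  refine ⟨flatSpectrum (1 / 2 + c) (-(1 / (2 * q))), fun x => ?_, ?_⟩
  · have hqb : q * -(1 / (2 * q)) = -(1 / 2) := by field_simp
    simp only [flatSpectrum, Set.mem_Icc, ← hq_def]
    split_ifs
    · rw [hqb]
      constructor <;> linarith [hc.1, hc.2]
    · constructor <;> linarith [hc.1, hc.2]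
  show average _ ^ ℓ * solutionDensity a _ + average (1 - _) ^ ℓ * solutionDensity a (1 - _) < _
  rw [one_sub_flatSpectrum, average_flatSpectrum, average_flatSpectrum,
    solutionDensity_flatSpectrum a ha hk.pos.ne', solutionDensity_flatSpectrum a ha hk.pos.ne',
    hk.neg_pow]
  have h2 : (2 : ℝ) ^ ((1 : ℤ) - k - ℓ) = 2 * (1 / 2) ^ (k + ℓ) := by
    rw [sub_sub, zpow_sub₀ two_ne_zero, zpow_one, ← Nat.cast_add, zpow_natCast, one_div, inv_pow,
      div_eq_mul_inv]
  rw [h2]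
  convert hlt using 1
  ring
end
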